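/- arXiv:2508.12855 — 5 statements merged into one kernel-verified Lean document; each statement's English description precedes it below -/
import Mathlib

section
/- Let G be a graph on n vertices with e(G) ≥ (1/4 - ε)n², and suppose that every induced subgraph of G on n' vertices has at most n'²/4 edges. Then the set S = {v ∈ V(G) : d_G(v) ≤ (1/2 - 4√ε)n} satisfies |S| ≤ √ε·n, provided 0 < ε < 1/400² and n is large enough that (1 - 2√ε + 12ε)n²/4 > (1 - 2√ε + 2ε)n²/4 holds after removing ⌊√ε·n⌋ vertices (i.e., for n sufficiently large depending on ε). -/
open Finset SimpleGraph
open scoped Classical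

/-- `edgesIn G s` is the number of edges of `G` with both endpoints in `s`. -/
noncomputable def edgesIn {V : Type*} [Fintype V] (G : SimpleGraph V) (s : Finset V) : ℕ :=
  (G.edgeFinset.filter (fun e => ∀ v ∈ e, v ∈ s)).card

/-- Claim 2.2: if `e(G) ≥ (1/4 - ε) n²` and every induced subgraph on `n'` vertices has at
most `n'²/4` edges, then the set `S` of vertices of degree at most `(1/2 - 4√ε) n` has
size at most `√ε · n`, for `0 < ε < 1/400²` and `n` sufficiently large depending on `ε`. -/
theorem stmt2 (ε : ℝ) (hε : 0 < ε) (hε' : ε < 1 / 400 ^ 2) :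
    ∃ N : ℕ, ∀ n : ℕ, N ≤ n → ∀ G : SimpleGraph (Fin n),
      ((1 : ℝ) / 4 - ε) * n ^ 2 ≤ (G.edgeFinset.card : ℝ) →
      (∀ s : Finset (Fin n), ((edgesIn G s : ℝ)) ≤ (s.card : ℝ) ^ 2 / 4) →
      ((Finset.univ.filter
          (fun v => (G.degree v : ℝ) ≤ ((1 : ℝ) / 2 - 4 * Real.sqrt ε) * n)).card : ℝ)
        ≤ Real.sqrt ε * n := by
  set a := Real.sqrt ε with ha
  have ha0 : 0 < a := Real.sqrt_pos.2 hε
  have ha2 : a ^ 2 = ε := Real.sq_sqrt hε.le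
  obtain ⟨N, hN⟩ := exists_nat_ge ((2 * a + 1) / (11 * ε))
  refine ⟨max N 1, fun n hn G he hind => ?_⟩
  have hn1 : 1 ≤ n := le_trans (le_max_right _ _) hn
  have hn1' : (1 : ℝ) ≤ n := by exact_mod_cast hn1
  have hNn : (N : ℝ) ≤ n := by exact_mod_cast le_trans (le_max_left _ _) hn
  have hkey : 2 * a * n + 1 ≤ 11 * ε * n ^ 2 := by
    have h2 : (2 * a + 1) ≤ 11 * ε * n := by
      calc 2 * a + 1 = ((2 * a + 1) / (11 * ε)) * (11 * ε) := by field_simp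
        _ ≤ n * (11 * ε) := by
            apply mul_le_mul_of_nonneg_right (hN.trans hNn); positivity
        _ = 11 * ε * n := by ring
    nlinarith
  by_contra hcon
  push_neg at hcon
  set S := Finset.univ.filter
      (fun v => (G.degree v : ℝ) ≤ ((1 : ℝ) / 2 - 4 * a) * n) with hS
  set t := ⌊a * n⌋₊ + 1 with htdef
  have htS : t ≤ S.card := (Nat.floor_lt (by positivity)).2 hcon
  obtain ⟨T, hTS, hTcard⟩ := Finset.exists_subset_card_eq htS
  have htn : t ≤ n := by
    calc t ≤ S.card := htS
      _ ≤ Fintype.card (Fin n) := S.card_le_univ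
      _ = n := Fintype.card_fin n
  set s := (Finset.univ : Finset (Fin n)) \ T with hsdef
  have hscard : s.card = n - t := by
    rw [hsdef, card_sdiff_of_subset (subset_univ T), card_univ, Fintype.card_fin, hTcard]
  -- edge counting
  have hsubset : G.edgeFinset ⊆ (G.edgeFinset.filter (fun e => ∀ v ∈ e, v ∈ s)) ∪
      T.biUnion (fun v => G.incidenceFinset v) := by
    intro e he'
    by_cases h : ∀ v ∈ e, v ∈ s
    · exact mem_union_left _ (mem_filter.2 ⟨he', h⟩)
    · push_neg at h
      obtain ⟨v, hv, hvs⟩ := h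
      have hvT : v ∈ T := by
        by_contra hvT
        exact hvs (by simp [hsdef, hvT])
      refine mem_union_right _ (mem_biUnion.2 ⟨v, hvT, ?_⟩)
      rw [mem_incidenceFinset]
      exact ⟨mem_edgeFinset.1 he', hv⟩
  have h1 : G.edgeFinset.card ≤ edgesIn G s + ∑ v ∈ T, G.degree v := by
    calc G.edgeFinset.card ≤ ((G.edgeFinset.filter (fun e => ∀ v ∈ e, v ∈ s)) ∪
          T.biUnion (fun v => G.incidenceFinset v)).card := card_le_card hsubset
      _ ≤ (G.edgeFinset.filter (fun e => ∀ v ∈ e, v ∈ s)).card +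
            (T.biUnion (fun v => G.incidenceFinset v)).card := card_union_le _ _
      _ ≤ (G.edgeFinset.filter (fun e => ∀ v ∈ e, v ∈ s)).card +
            ∑ v ∈ T, (G.incidenceFinset v).card := add_le_add_right (card_biUnion_le) _
      _ = edgesIn G s + ∑ v ∈ T, G.degree v := by
          simp only [G.card_incidenceFinset_eq_degree]
          congr 1
          unfold edgesIn
          apply congrArg
          ext e
          simp
  have hdeg : ∀ v ∈ T, (G.degree v : ℝ) ≤ (1 / 2 - 4 * a) * n := by
    intro v hv
    exact (mem_filter.1 (hTS hv)).2
  have h2 : (∑ v ∈ T, (G.degree v : ℝ)) ≤ (t : ℝ) * ((1 / 2 - 4 * a) * n) := by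
    calc (∑ v ∈ T, (G.degree v : ℝ)) ≤ T.card • ((1 / 2 - 4 * a) * n) :=
          Finset.sum_le_card_nsmul T _ _ hdeg
      _ = (t : ℝ) * ((1 / 2 - 4 * a) * n) := by rw [hTcard, nsmul_eq_mul]
  have h3 : (edgesIn G s : ℝ) ≤ ((n : ℝ) - t) ^ 2 / 4 := by
    have := hind s
    rw [hscard] at this
    rwa [Nat.cast_sub htn] at this
  have h1' : (G.edgeFinset.card : ℝ) ≤ (edgesIn G s : ℝ) + ∑ v ∈ T, (G.degree v : ℝ) := by
    exact_mod_cast h1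
  -- numeric bounds on t
  have ht1 : a * n < (t : ℝ) := by
    have := Nat.lt_floor_add_one (a * n)
    push_cast [htdef]
    push_cast at this
    linarith
  have ht2 : (t : ℝ) ≤ a * n + 1 := by
    have := Nat.floor_le (show (0:ℝ) ≤ a * n by positivity)
    push_cast [htdef]
    linarith
  have hnpos : (0 : ℝ) < n := by linarith
  have hprod : 0 < a * n * ((t : ℝ) - a * n) :=
    mul_pos (mul_pos ha0 hnpos) (by linarith)
  have htsq : (t : ℝ) ^ 2 ≤ (a * n + 1) ^ 2 := by
    apply pow_le_pow_left₀ (by positivity) ht2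
  nlinarith [he, h1', h2, h3, hprod, htsq, hkey, ha2]
end

section
/- The graph K_{⌈(n−2)/2⌉,⌊(n−2)/2⌋} ∘ K₃, obtained by identifying one vertex of the complete bipartite graph K_{⌈(n−2)/2⌉,⌊(n−2)/2⌋} with one vertex of a triangle K₃, is θ(1,q,r)-free for all integers q,r ≥ 2 with q even, and has exactly ⌊(n−2)²/4⌋ + 3 edges. -/
open Finset SimpleGraph
open scoped Classical

/-- The theta graph `θ(1,q,r)`: the cycle `C_{q+r}` together with the chord `{0, q}`. -/
def theta (q r : ℕ) : SimpleGraph (Fin (q + r)) :=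
  SimpleGraph.fromRel (fun u v =>
    (SimpleGraph.cycleGraph (q + r)).Adj u v ∨ ((u : ℕ) = 0 ∧ (v : ℕ) = q))

/-- `K_{a,b} ∘ K₃`: the graph obtained from the complete bipartite graph `K_{a,b}` by
identifying the first vertex of the part of size `b` with one vertex of a triangle,
the triangle's other two vertices being new. -/
def KcircK3 (a b : ℕ) : SimpleGraph (Fin a ⊕ Fin b ⊕ Fin 2) :=
  SimpleGraph.fromRel (fun u v =>
    (∃ (x : Fin a) (y : Fin b), u = Sum.inl x ∧ v = Sum.inr (Sum.inl y)) ∨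
    (∃ (y : Fin b) (t : Fin 2), (y : ℕ) = 0 ∧ u = Sum.inr (Sum.inl y) ∧ v = Sum.inr (Sum.inr t)) ∨
    (∃ (s t : Fin 2), s ≠ t ∧ u = Sum.inr (Sum.inr s) ∧ v = Sum.inr (Sum.inr t)))

lemma extraNbr {a b : ℕ} {s : Fin 2} {w} (h : (KcircK3 a b).Adj (Sum.inr (Sum.inr s)) w) :
    (∃ y : Fin b, (y:ℕ) = 0 ∧ w = Sum.inr (Sum.inl y)) ∨
    (∃ t : Fin 2, t ≠ s ∧ w = Sum.inr (Sum.inr t)) := by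
  rw [KcircK3, SimpleGraph.fromRel_adj] at h
  obtain ⟨-, h | h⟩ := h <;>
    rcases h with ⟨x,y,h1,h2⟩ | ⟨y,t,h0,h1,h2⟩ | ⟨s',t,hst,h1,h2⟩ <;> aesop

lemma nonExtraAdj {a b : ℕ} {u v} (h : (KcircK3 a b).Adj u v)
    (hu : ∀ s, u ≠ Sum.inr (Sum.inr s)) (hv : ∀ s, v ≠ Sum.inr (Sum.inr s)) :
    ((∃ x, u = Sum.inl x) ↔ ¬ ∃ x, v = Sum.inl x) := by
  rw [KcircK3, SimpleGraph.fromRel_adj] at h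
  obtain ⟨-, h | h⟩ := h <;>
    rcases h with ⟨x,y,h1,h2⟩ | ⟨y,t,h0,h1,h2⟩ | ⟨s',t,hst,h1,h2⟩ <;> simp_all

lemma eqA {b : ℕ} {y y' : Fin b} (h : (y:ℕ) = 0) (h' : (y':ℕ) = 0) : y = y' :=
  Fin.ext (h.trans h'.symm)

lemma eqB {t t' s : Fin 2} (h : t ≠ s) (h' : t' ≠ s) : t = t' := by
  fin_cases t <;> fin_cases t' <;> fin_cases s <;> simp_all

lemma nbrEq {a b : ℕ} {s : Fin 2} {w w'} (h : (KcircK3 a b).Adj (Sum.inr (Sum.inr s)) w)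
    (h' : (KcircK3 a b).Adj (Sum.inr (Sum.inr s)) w')
    (hc : (∃ x, w = Sum.inr (Sum.inl x)) ↔ (∃ x, w' = Sum.inr (Sum.inl x))) : w = w' := by
  rcases extraNbr h with ⟨y,hy,rfl⟩|⟨t,ht,rfl⟩ <;> rcases extraNbr h' with ⟨y',hy',rfl⟩|⟨t',ht',rfl⟩
  · rw [eqA hy hy']
  · simp at hc
  · simp at hc
  · rw [eqB ht ht']

lemma extra3 {a b : ℕ} {s : Fin 2} {w1 w2 w3} (h1 : (KcircK3 a b).Adj (Sum.inr (Sum.inr s)) w1)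
    (h2 : (KcircK3 a b).Adj (Sum.inr (Sum.inr s)) w2)
    (h3 : (KcircK3 a b).Adj (Sum.inr (Sum.inr s)) w3) : w1 = w2 ∨ w1 = w3 ∨ w2 = w3 := by
  by_cases c1 : ∃ x, w1 = Sum.inr (Sum.inl x) <;> by_cases c2 : ∃ x, w2 = Sum.inr (Sum.inl x) <;>
    by_cases c3 : ∃ x, w3 = Sum.inr (Sum.inl x) <;>
    first
      | exact Or.inl (nbrEq h1 h2 (iff_of_true ‹_› ‹_›))
      | exact Or.inl (nbrEq h1 h2 (iff_of_false ‹_› ‹_›))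
      | exact Or.inr (Or.inl (nbrEq h1 h3 (iff_of_true ‹_› ‹_›)))
      | exact Or.inr (Or.inl (nbrEq h1 h3 (iff_of_false ‹_› ‹_›)))
      | exact Or.inr (Or.inr (nbrEq h2 h3 (iff_of_true ‹_› ‹_›)))
      | exact Or.inr (Or.inr (nbrEq h2 h3 (iff_of_false ‹_› ‹_›)))


lemma subval_one {n : ℕ} (hn : 2 ≤ n) (u v : Fin n) :
    (u - v).val = 1 ↔ (u.val = v.val + 1 ∨ (u.val = 0 ∧ v.val = n - 1)) := by
  have hu := u.isLt; have hv := v.isLt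
  rw [Fin.sub_def]
  simp only
  have hd : (n - v.val + u.val) % n =
      if n - v.val + u.val < n then n - v.val + u.val else n - v.val + u.val - n := by
    split
    · exact Nat.mod_eq_of_lt ‹_›
    · rw [Nat.mod_eq_sub_mod (le_of_not_gt ‹_›), Nat.mod_eq_of_lt (by omega)]
  rw [hd]
  split <;> omega

lemma theta_adj' {q r : ℕ} (hq : 1 ≤ q) (hr : 1 ≤ r) {u v : Fin (q + r)} :
    (theta q r).Adj u v ↔ u.val ≠ v.val ∧
      (u.val = v.val + 1 ∨ v.val = u.val + 1 ∨
       (u.val = 0 ∧ v.val = q + r - 1) ∨ (v.val = 0 ∧ u.val = q + r - 1) ∨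
       (u.val = 0 ∧ v.val = q) ∨ (v.val = 0 ∧ u.val = q)) := by
  have h2 : 2 ≤ q + r := by omega
  rw [theta, SimpleGraph.fromRel_adj]
  simp only [SimpleGraph.cycleGraph_adj', subval_one h2, Ne, Fin.ext_iff]
  constructor <;> intro h <;> [skip; skip] <;>
    · obtain ⟨h1, h2'⟩ := h
      exact ⟨h1, by omega⟩

lemma kfree (a b q r : ℕ) (hq : 2 ≤ q) (hr : 2 ≤ r) (hqe : Even q) :
    ¬ ∃ f : theta q r →g KcircK3 a b, Function.Injective f := by
  rintro ⟨f, hf⟩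
  have hn : 4 ≤ q + r := by omega
  have hq1 : 1 ≤ q := by omega
  have hr1 : 1 ≤ r := by omega
  -- adjacency helpers with ℕ-valued goals
  have tadj1 : ∀ (x : Fin (q + r)) (yv : ℕ) (hy : yv < q + r), x.val ≠ yv →
      (x.val = yv + 1 ∨ yv = x.val + 1 ∨ (x.val = 0 ∧ yv = q + r - 1) ∨
       (yv = 0 ∧ x.val = q + r - 1) ∨ (x.val = 0 ∧ yv = q) ∨ (yv = 0 ∧ x.val = q)) →
      (theta q r).Adj x ⟨yv, hy⟩ := by
    intro x yv hy hne hcase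
    rw [theta_adj' hq1 hr1]
    exact ⟨hne, hcase⟩
  have tadj2 : ∀ (xv yv : ℕ) (hx : xv < q + r) (hy : yv < q + r), xv ≠ yv →
      (xv = yv + 1 ∨ yv = xv + 1 ∨ (xv = 0 ∧ yv = q + r - 1) ∨
       (yv = 0 ∧ xv = q + r - 1) ∨ (xv = 0 ∧ yv = q) ∨ (yv = 0 ∧ xv = q)) →
      (theta q r).Adj ⟨xv, hx⟩ ⟨yv, hy⟩ := by
    intro xv yv hx hy hne hcase
    exact tadj1 ⟨xv, hx⟩ yv hy hne hcase
  have key3 : ∀ (u : Fin (q + r)) (n1 n2 n3 : ℕ) (h1 : n1 < q + r) (h2 : n2 < q + r)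
      (h3 : n3 < q + r) (s : Fin 2), f u = Sum.inr (Sum.inr s) →
      (theta q r).Adj u ⟨n1, h1⟩ → (theta q r).Adj u ⟨n2, h2⟩ → (theta q r).Adj u ⟨n3, h3⟩ →
      n1 ≠ n2 → n1 ≠ n3 → n2 ≠ n3 → False := by
    intro u n1 n2 n3 h1 h2 h3 s hfu a1' a2' a3' d12 d13 d23
    have a1 := f.map_adj a1'
    have a2 := f.map_adj a2'
    have a3 := f.map_adj a3'
    rw [hfu] at a1 a2 a3
    rcases extra3 a1 a2 a3 with h | h | h
    · exact d12 (Fin.mk_eq_mk.mp (hf h))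
    · exact d13 (Fin.mk_eq_mk.mp (hf h))
    · exact d23 (Fin.mk_eq_mk.mp (hf h))
  have notE0q : ∀ (u : Fin (q + r)) (s : Fin 2), (u.val = 0 ∨ u.val = q) →
      f u ≠ Sum.inr (Sum.inr s) := by
    intro u s hu hfu
    rcases hu with hu | hu
    · exact key3 u 1 q (q + r - 1) (by omega) (by omega) (by omega) s hfu
        (tadj1 u 1 (by omega) (by omega) (by omega))
        (tadj1 u q (by omega) (by omega) (by omega))
        (tadj1 u (q + r - 1) (by omega) (by omega) (by omega))
        (by omega) (by omega) (by omega)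
    · exact key3 u (q - 1) (q + 1) 0 (by omega) (by omega) (by omega) s hfu
        (tadj1 u (q - 1) (by omega) (by omega) (by omega))
        (tadj1 u (q + 1) (by omega) (by omega) (by omega))
        (tadj1 u 0 (by omega) (by omega) (by omega))
        (by omega) (by omega) (by omega)
  have notExtra : ∀ (u : Fin (q + r)) (s : Fin 2), f u ≠ Sum.inr (Sum.inr s) := by
    intro u s hfu
    have hu0 : u.val ≠ 0 := fun h => notE0q u s (Or.inl h) hfu
    have huq : u.val ≠ q := fun h => notE0q u s (Or.inr h) hfu
    have hult := u.isLt
    obtain ⟨k, hk⟩ : ∃ k, u.val = k := ⟨_, rfl⟩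
    rw [hk] at hu0 huq hult
    obtain ⟨kp, hkp, hkpd⟩ : ∃ kp, kp < q + r ∧
        ((kp = k + 1 ∧ k + 1 < q + r) ∨ (kp = 0 ∧ k + 1 = q + r)) := by
      by_cases h : k + 1 = q + r
      · exact ⟨0, by omega, Or.inr ⟨rfl, h⟩⟩
      · exact ⟨k + 1, by omega, Or.inl ⟨rfl, by omega⟩⟩
    have hadjm : (theta q r).Adj u ⟨k - 1, by omega⟩ := tadj1 u (k - 1) (by omega) (by omega) (by omega)
    have hadjp : (theta q r).Adj u ⟨kp, hkp⟩ := tadj1 u kp hkp (by omega) (by omega)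
    have am := f.map_adj hadjm
    have ap := f.map_adj hadjp
    rw [hfu] at am ap
    -- helper: w mapped to the other extra t, aa mapped to B0, c second neighbor of w
    have main : ∀ (w : Fin (q + r)) (aav cv : ℕ) (haa : aav < q + r) (hc : cv < q + r)
        (t : Fin 2) (y : Fin b),
        t ≠ s → f w = Sum.inr (Sum.inr t) → (y : ℕ) = 0 →
        f ⟨aav, haa⟩ = Sum.inr (Sum.inl y) →
        (theta q r).Adj w ⟨cv, hc⟩ → (⟨cv, hc⟩ : Fin (q + r)) ≠ u → cv ≠ aav → False := by
      intro w aav cv haa hc t y hts hfw hy hfaa hadj hcu hcaa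
      have ac := f.map_adj hadj
      rw [hfw] at ac
      rcases extraNbr ac with ⟨y', hy', hceq⟩ | ⟨t', ht', hceq⟩
      · have : f ⟨cv, hc⟩ = f ⟨aav, haa⟩ := by rw [hceq, hfaa, eqA hy' hy]
        exact hcaa (Fin.mk_eq_mk.mp (hf this))
      · have hts' : t' = s := eqB (s := t) ht' (Ne.symm hts)
        have : f ⟨cv, hc⟩ = f u := by rw [hceq, hts', hfu]
        exact hcu (hf this)
    rcases extraNbr am with ⟨y1, hy1, hm⟩ | ⟨t1, ht1, hm⟩ <;>
      rcases extraNbr ap with ⟨y2, hy2, hp⟩ | ⟨t2, ht2, hp⟩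
    · have heq : f (⟨k - 1, by omega⟩ : Fin (q + r)) = f ⟨kp, hkp⟩ := by
        rw [hm, hp, eqA hy1 hy2]
      exact absurd (Fin.mk_eq_mk.mp (hf heq)) (by omega)
    · -- w = up (val kp), aa = um (val k-1), f up = extra t2
      have hkp0 : kp ≠ 0 := fun h0 => notE0q ⟨kp, hkp⟩ t2 (Or.inl h0) hp
      have hkpq : kp ≠ q := fun h0 => notE0q ⟨kp, hkp⟩ t2 (Or.inr h0) hp
      have hkp1 : kp = k + 1 ∧ k + 1 < q + r := by rcases hkpd with h | h; exact h; omega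
      obtain ⟨cv, hc2, hcd⟩ : ∃ cv, cv < q + r ∧
          ((cv = k + 2 ∧ k + 2 < q + r) ∨ (cv = 0 ∧ k + 2 = q + r)) := by
        by_cases h : k + 2 = q + r
        · exact ⟨0, by omega, Or.inr ⟨rfl, h⟩⟩
        · exact ⟨k + 2, by omega, Or.inl ⟨rfl, by omega⟩⟩
      refine main ⟨kp, hkp⟩ (k - 1) cv (by omega) hc2 t2 y1 ht2 hp hy1 hm ?_ ?_ ?_
      · exact tadj2 kp cv hkp hc2 (by omega) (by omega)
      · intro h
        have h3 := (congrArg Fin.val h).trans hk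
        simp only [Fin.val_mk] at h3
        omega
      · omega
    · -- w = um (val k-1), aa = up (val kp), f um = extra t1
      have hm0 : k - 1 ≠ 0 := fun h0 => notE0q ⟨k - 1, by omega⟩ t1 (Or.inl h0) hm
      have hmq : k - 1 ≠ q := fun h0 => notE0q ⟨k - 1, by omega⟩ t1 (Or.inr h0) hm
      refine main ⟨k - 1, by omega⟩ kp (k - 2) hkp (by omega) t1 y2 ht1 hm hy2 hp ?_ ?_ ?_
      · exact tadj2 (k - 1) (k - 2) (by omega) (by omega) (by omega) (by omega)
      · intro h
        have h3 := (congrArg Fin.val h).trans hk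
        simp only [Fin.val_mk] at h3
        omega
      · omega
    · have heq : f (⟨k - 1, by omega⟩ : Fin (q + r)) = f ⟨kp, hkp⟩ := by
        rw [hm, hp, eqB ht1 ht2]
      exact absurd (Fin.mk_eq_mk.mp (hf heq)) (by omega)
  -- parity argument
  have h0lt : 0 < q + r := by omega
  have hqlt : q < q + r := by omega
  set L : Fin (q + r) → Prop := fun u => ∃ x, f u = Sum.inl x with hL
  have step : ∀ u v, (theta q r).Adj u v → (L u ↔ ¬ L v) := fun u v h =>
    nonExtraAdj (f.map_adj h) (notExtra u) (notExtra v)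
  have walk : ∀ k, k ≤ q → ∀ (hklt : k < q + r), (L ⟨k, hklt⟩ ↔ (Even k ↔ L ⟨0, h0lt⟩)) := by
    intro k
    induction k with
    | zero =>
      intro _ hklt
      constructor
      · intro h
        exact iff_of_true Even.zero h
      · intro h
        exact h.mp Even.zero
    | succ m ih =>
      intro hk hklt
      have hmlt : m < q + r := by omega
      have hm := ih (by omega) hmlt
      have hadj : (theta q r).Adj ⟨m, hmlt⟩ ⟨m + 1, hklt⟩ :=
        tadj2 m (m + 1) hmlt hklt (by omega) (by omega)
      have hs := step _ _ hadj
      rw [Nat.even_add_one]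
      calc L ⟨m + 1, hklt⟩ ↔ ¬ L ⟨m, hmlt⟩ := iff_not_comm.mp hs
        _ ↔ ¬ (Even m ↔ L ⟨0, h0lt⟩) := not_congr hm
        _ ↔ (¬ Even m ↔ L ⟨0, h0lt⟩) := not_iff
  have hwq := walk q le_rfl hqlt
  have hchord : (theta q r).Adj ⟨0, h0lt⟩ ⟨q, hqlt⟩ :=
    tadj2 0 q h0lt hqlt (by omega) (by omega)
  have hs := step _ _ hchord
  have h1 : L ⟨q, hqlt⟩ ↔ L ⟨0, h0lt⟩ :=
    hwq.trans ⟨fun h => h.mp hqe, fun h => iff_of_true hqe h⟩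
  exact iff_not_self (hs.trans (not_congr h1))

lemma count (a b : ℕ) (hb : 1 ≤ b) : (KcircK3 a b).edgeFinset.card = a * b + 3 := by
  classical
  set y0 : Fin b := ⟨0, hb⟩ with hy0
  set E1 : Finset (Sym2 (Fin a ⊕ Fin b ⊕ Fin 2)) :=
    Finset.univ.image (fun p : Fin a × Fin b => s(Sum.inl p.1, Sum.inr (Sum.inl p.2))) with hE1
  set E2 : Finset (Sym2 (Fin a ⊕ Fin b ⊕ Fin 2)) :=
    {s(Sum.inr (Sum.inl y0), Sum.inr (Sum.inr (0 : Fin 2))),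
     s(Sum.inr (Sum.inl y0), Sum.inr (Sum.inr (1 : Fin 2))),
     s(Sum.inr (Sum.inr (0 : Fin 2)), Sum.inr (Sum.inr (1 : Fin 2)))} with hE2
  have hE : (KcircK3 a b).edgeFinset = E1 ∪ E2 := by
    ext e
    induction e with
    | _ u v =>
      simp only [mem_edgeFinset, mem_edgeSet, Finset.mem_union, hE1, hE2,
        Finset.mem_image, Finset.mem_insert, Finset.mem_singleton, Finset.mem_univ,
        true_and, Prod.exists, Sym2.eq, Sym2.rel_iff', Prod.mk.injEq, Prod.swap_prod_mk]
      rw [KcircK3, SimpleGraph.fromRel_adj]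
      constructor
      · rintro ⟨hne, h | h⟩ <;>
          rcases h with ⟨x, y, rfl, rfl⟩ | ⟨y, t, h0, rfl, rfl⟩ | ⟨s', t, hst, rfl, rfl⟩
        · exact Or.inl ⟨x, y, Or.inl ⟨rfl, rfl⟩⟩
        · have hyy : y = y0 := Fin.ext h0
          subst hyy
          fin_cases t
          · exact Or.inr (Or.inl (Or.inl ⟨rfl, rfl⟩))
          · exact Or.inr (Or.inr (Or.inl (Or.inl ⟨rfl, rfl⟩)))
        · fin_cases s' <;> fin_cases t
          · simp at hst
          · exact Or.inr (Or.inr (Or.inr (Or.inl ⟨rfl, rfl⟩)))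
          · exact Or.inr (Or.inr (Or.inr (Or.inr ⟨rfl, rfl⟩)))
          · simp at hst
        · exact Or.inl ⟨x, y, Or.inr ⟨rfl, rfl⟩⟩
        · have hyy : y = y0 := Fin.ext h0
          subst hyy
          fin_cases t
          · exact Or.inr (Or.inl (Or.inr ⟨rfl, rfl⟩))
          · exact Or.inr (Or.inr (Or.inl (Or.inr ⟨rfl, rfl⟩)))
        · fin_cases s' <;> fin_cases t
          · simp at hst
          · exact Or.inr (Or.inr (Or.inr (Or.inr ⟨rfl, rfl⟩)))
          · exact Or.inr (Or.inr (Or.inr (Or.inl ⟨rfl, rfl⟩)))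
          · simp at hst
      · rintro (⟨x, y, ⟨rfl, rfl⟩ | ⟨rfl, rfl⟩⟩ | (⟨rfl, rfl⟩ | ⟨rfl, rfl⟩) |
          (⟨rfl, rfl⟩ | ⟨rfl, rfl⟩) | (⟨rfl, rfl⟩ | ⟨rfl, rfl⟩))
        · exact ⟨by simp, Or.inl (Or.inl ⟨x, y, rfl, rfl⟩)⟩
        · exact ⟨by simp, Or.inr (Or.inl ⟨x, y, rfl, rfl⟩)⟩
        · exact ⟨by simp, Or.inl (Or.inr (Or.inl ⟨y0, 0, rfl, rfl, rfl⟩))⟩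
        · exact ⟨by simp, Or.inr (Or.inr (Or.inl ⟨y0, 0, rfl, rfl, rfl⟩))⟩
        · exact ⟨by simp, Or.inl (Or.inr (Or.inl ⟨y0, 1, rfl, rfl, rfl⟩))⟩
        · exact ⟨by simp, Or.inr (Or.inr (Or.inl ⟨y0, 1, rfl, rfl, rfl⟩))⟩
        · exact ⟨by simp, Or.inl (Or.inr (Or.inr ⟨0, 1, by decide, rfl, rfl⟩))⟩
        · exact ⟨by simp, Or.inr (Or.inr (Or.inr ⟨0, 1, by decide, rfl, rfl⟩))⟩
  have hdisj : Disjoint E1 E2 := by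
    rw [Finset.disjoint_left]
    intro e he1 he2
    rw [hE1] at he1
    obtain ⟨⟨x, y⟩, -, rfl⟩ := Finset.mem_image.mp he1
    rw [hE2] at he2
    simp only [Finset.mem_insert, Finset.mem_singleton, Sym2.eq, Sym2.rel_iff',
      Prod.mk.injEq, Prod.swap_prod_mk] at he2
    rcases he2 with (⟨h, -⟩ | ⟨h, -⟩) | (⟨h, -⟩ | ⟨h, -⟩) | (⟨h, -⟩ | ⟨h, -⟩) <;> exact absurd h (by simp)
  have c1 : E1.card = a * b := by
    rw [hE1, Finset.card_image_of_injective _ ?_, Finset.card_univ, Fintype.card_prod,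
      Fintype.card_fin, Fintype.card_fin]
    intro p p' h
    simp only [Sym2.eq, Sym2.rel_iff', Prod.mk.injEq, Prod.swap_prod_mk,
      Sum.inl.injEq, Sum.inr.injEq] at h
    rcases h with ⟨h1, h2⟩ | ⟨h1, h2⟩
    · exact Prod.ext h1 h2
    · exact absurd h1 (by simp)
  have c2 : E2.card = 3 := by
    rw [hE2]
    rw [Finset.card_insert_of_notMem, Finset.card_insert_of_notMem, Finset.card_singleton]
    · simp only [Finset.mem_singleton, Sym2.eq, Sym2.rel_iff', Prod.mk.injEq, Prod.swap_prod_mk]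
      rintro (⟨h, -⟩ | ⟨h, -⟩) <;> simp at h
    · simp only [Finset.mem_insert, Finset.mem_singleton, Sym2.eq, Sym2.rel_iff',
        Prod.mk.injEq, Prod.swap_prod_mk]
      rintro ((⟨-, h⟩ | ⟨h, -⟩) | (⟨h, -⟩ | ⟨h, -⟩)) <;> first | simp at h | exact absurd h (by decide)
  rw [hE, Finset.card_union_of_disjoint hdisj, c1, c2]

/-- `K_{⌈(n−2)/2⌉,⌊(n−2)/2⌋} ∘ K₃` is `θ(1,q,r)`-free for all `q, r ≥ 2` with `q` even,
and has exactly `⌊(n−2)²/4⌋ + 3` edges. -/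
theorem stmt9 (n q r : ℕ) (hn : 4 ≤ n) (hq : 2 ≤ q) (hr : 2 ≤ r) (hqe : Even q) :
    (¬ ∃ f : theta q r →g KcircK3 ((n - 1) / 2) ((n - 2) / 2), Function.Injective f) ∧
    (KcircK3 ((n - 1) / 2) ((n - 2) / 2)).edgeFinset.card = (n - 2) ^ 2 / 4 + 3 := by
  have hb : 1 ≤ (n - 2) / 2 := by omega
  refine ⟨kfree _ _ q r hq hr hqe, ?_⟩
  rw [count _ _ hb]
  obtain ⟨m, hm | hm⟩ : ∃ m, n = 2 * m + 4 ∨ n = 2 * m + 5 := ⟨(n - 4) / 2, by omega⟩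
  · have h1 : (n - 1) / 2 = m + 1 := by omega
    have h2 : (n - 2) / 2 = m + 1 := by omega
    have h3 : (n - 2) ^ 2 = 4 * ((m + 1) * (m + 1)) := by
      have h4 : n - 2 = 2 * (m + 1) := by omega
      rw [h4]; ring
    rw [h1, h2, h3, Nat.mul_div_cancel_left _ (by norm_num : 0 < 4)]
  · have h1 : (n - 1) / 2 = m + 2 := by omega
    have h2 : (n - 2) / 2 = m + 1 := by omega
    have h3 : (n - 2) ^ 2 = 4 * ((m + 2) * (m + 1)) + 1 := by
      have h4 : n - 2 = 2 * m + 3 := by omega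
      rw [h4]; ring
    rw [h1, h2, h3]
    set X := (m + 2) * (m + 1) with hX
    omega
end

section
/- The graph K_{⌈(n−1)/2⌉,⌊(n−1)/2⌋} • K₃, obtained by identifying an edge of K_{⌈(n−1)/2⌉,⌊(n−1)/2⌋} with an edge of a triangle, is θ(1,q,r)-free whenever q,r ≥ 2 are both even, and has exactly ⌊(n−1)²/4⌋ + 2 edges. -/
open Finset SimpleGraph
open scoped Classical

/-- `K_{a,b} • K₃`: the complete bipartite graph `K_{a,b}`, with one new vertex `w`
adjacent to the endpoints `u₀ ∈ A`, `v₀ ∈ B` of an edge of `K_{a,b}` (i.e. an edge of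
`K_{a,b}` is identified with an edge of a triangle). -/
def KbulK3 (a b : ℕ) : SimpleGraph (Fin a ⊕ Fin b ⊕ Fin 1) :=
  SimpleGraph.fromRel (fun u v =>
    (∃ (x : Fin a) (y : Fin b), u = Sum.inl x ∧ v = Sum.inr (Sum.inl y)) ∨
    (∃ (x : Fin a) (w : Fin 1), (x : ℕ) = 0 ∧ u = Sum.inl x ∧ v = Sum.inr (Sum.inr w)) ∨
    (∃ (y : Fin b) (w : Fin 1), (y : ℕ) = 0 ∧ u = Sum.inr (Sum.inl y) ∧ v = Sum.inr (Sum.inr w)))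

def sig {a b : ℕ} : Fin a ⊕ Fin b ⊕ Fin 1 → ZMod 2
  | Sum.inl _ => 0
  | Sum.inr (Sum.inl _) => 1
  | Sum.inr (Sum.inr _) => 0

def Wv (a b : ℕ) : Fin a ⊕ Fin b ⊕ Fin 1 := Sum.inr (Sum.inr 0)

lemma finone (w : Fin 1) : w = 0 := Subsingleton.elim _ _

lemma sig_adj {a b : ℕ} {x y : Fin a ⊕ Fin b ⊕ Fin 1} (h : (KbulK3 a b).Adj x y)
    (hx : x ≠ Wv a b) (hy : y ≠ Wv a b) : sig x + sig y = 1 := by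
  rw [KbulK3, SimpleGraph.fromRel_adj] at h
  obtain ⟨hne, h | h⟩ := h <;>
  · rcases h with ⟨x', y', rfl, rfl⟩ | ⟨x', w', hx0, rfl, rfl⟩ | ⟨y', w', hy0, rfl, rfl⟩ <;>
      first
        | (simp [sig]; done)
        | (exact absurd (by rw [finone w']; rfl) hy)
        | (exact absurd (by rw [finone w']; rfl) hx)

lemma w_adj {a b : ℕ} (ha : 0 < a) (hb : 0 < b) {z : Fin a ⊕ Fin b ⊕ Fin 1}
    (h : (KbulK3 a b).Adj (Wv a b) z) :
    z = Sum.inl ⟨0, ha⟩ ∨ z = Sum.inr (Sum.inl ⟨0, hb⟩) := by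
  rw [KbulK3, SimpleGraph.fromRel_adj] at h
  obtain ⟨hne, h | h⟩ := h
  · rcases h with ⟨x', y', h, _⟩ | ⟨x', w', _, h, _⟩ | ⟨y', w', _, h, _⟩ <;> simp [Wv] at h
  · rcases h with ⟨x', y', rfl, h⟩ | ⟨x', w', hx0, rfl, _⟩ | ⟨y', w', hy0, rfl, _⟩
    · simp [Wv] at h
    · left; congr 1; exact Fin.ext hx0
    · right; congr 2; exact Fin.ext hy0

def tv (q r : ℕ) (hq : 2 ≤ q) (hr : 2 ≤ r) (i : ℕ) : Fin (q + r) :=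
  ⟨i % (q + r), Nat.mod_lt _ (by omega)⟩

lemma tv_eq {q r i : ℕ} (hq : 2 ≤ q) (hr : 2 ≤ r) (h : i < q + r) :
    (tv q r hq hr i : ℕ) = i := Nat.mod_eq_of_lt h

lemma theta_adj_succ {q r i : ℕ} (hq : 2 ≤ q) (hr : 2 ≤ r) (h : i + 1 < q + r) :
    (theta q r).Adj (tv q r hq hr i) (tv q r hq hr (i+1)) := by
  rw [theta, SimpleGraph.fromRel_adj]
  refine ⟨?_, Or.inl (Or.inl ?_)⟩
  · simp only [ne_eq, Fin.ext_iff, tv_eq hq hr h, tv_eq hq hr (by omega : i < q + r)]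
    omega
  · rw [SimpleGraph.cycleGraph_adj']
    right
    simp only [Fin.sub_def, tv, Fin.ext_iff]
    have e1 : (i + 1) % (q+r) = i + 1 := Nat.mod_eq_of_lt h
    have e2 : i % (q+r) = i := Nat.mod_eq_of_lt (by omega)
    simp only [e1, e2]
    have e3 : (q + r - i + (i + 1)) = (q + r) + 1 := by omega
    rw [e3, Nat.add_mod_left, Nat.mod_eq_of_lt (by omega)]

lemma theta_adj_chord {q r : ℕ} (hq : 2 ≤ q) (hr : 2 ≤ r) :
    (theta q r).Adj (tv q r hq hr 0) (tv q r hq hr q) := by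
  rw [theta, SimpleGraph.fromRel_adj]
  refine ⟨?_, Or.inl (Or.inr ⟨?_, ?_⟩)⟩
  · simp only [ne_eq, Fin.ext_iff, tv_eq hq hr (by omega : 0 < q + r),
      tv_eq hq hr (by omega : q < q + r)]
    omega
  · rw [tv_eq hq hr (by omega : 0 < q + r)]
  · rw [tv_eq hq hr (by omega : q < q + r)]

lemma theta_adj_wrap {q r : ℕ} (hq : 2 ≤ q) (hr : 2 ≤ r) :
    (theta q r).Adj (tv q r hq hr (q + r - 1)) (tv q r hq hr 0) := by
  rw [theta, SimpleGraph.fromRel_adj]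
  refine ⟨?_, Or.inl (Or.inl ?_)⟩
  · simp only [ne_eq, Fin.ext_iff, tv_eq hq hr (by omega : q + r - 1 < q + r),
      tv_eq hq hr (by omega : 0 < q + r)]
    omega
  · rw [SimpleGraph.cycleGraph_adj']
    right
    simp only [Fin.sub_def, tv, Fin.ext_iff]
    have h1 : (0:ℕ) % (q+r) = 0 := Nat.zero_mod _
    have h2 : (q + r - 1) % (q+r) = q + r - 1 := Nat.mod_eq_of_lt (by omega)
    simp only [h1, h2]
    have e3 : (q + r - (q + r - 1) + 0) = 1 := by omega
    rw [e3, Nat.mod_eq_of_lt (by omega)]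

lemma zflip : ∀ x y : ZMod 2, x + y = 1 → y = x + 1 := by decide
lemma zne : ∀ x : ZMod 2, x + x ≠ 1 := by decide
lemma zcon : ∀ x y : ZMod 2, x + y = 1 → y + 1 + x = 1 → False := by decide
lemma zone : ∀ x : ZMod 2, x ≠ 0 → x = 1 := by decide

lemma pigeon {α β : Type*} {f' : α → β} (hf : Function.Injective f') {x y z : α} {U V : β}
    (hxy : x ≠ y) (hxz : x ≠ z) (hyz : y ≠ z)
    (e1 : f' x = U ∨ f' x = V) (e2 : f' y = U ∨ f' y = V) (e3 : f' z = U ∨ f' z = V) :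
    False := by
  rcases e1 with e1|e1 <;> rcases e2 with e2|e2 <;> rcases e3 with e3|e3 <;>
    first
      | exact hxy (hf (e1.trans e2.symm))
      | exact hxz (hf (e1.trans e3.symm))
      | exact hyz (hf (e2.trans e3.symm))

lemma part1 {q r a b : ℕ} (hq : 2 ≤ q) (hr : 2 ≤ r) (hqe : Even q) (hre : Even r)
    (ha : 0 < a) (hb : 0 < b) :
    ¬ ∃ f : theta q r →g KbulK3 a b, Function.Injective f := by
  rintro ⟨f, hf⟩
  have claimA : ∃ i, i ≤ q ∧ f (tv q r hq hr i) = Wv a b := by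
    by_contra hA
    push_neg at hA
    have key : ∀ i, i ≤ q →
        sig (f (tv q r hq hr i)) = sig (f (tv q r hq hr 0)) + (i : ZMod 2) := by
      intro i hi
      induction i with
      | zero => simp
      | succ i ih =>
        have h1 := ih (by omega)
        have hadj := f.map_adj (theta_adj_succ hq hr (by omega : i + 1 < q + r))
        have h2 := zflip _ _ (sig_adj hadj (hA i (by omega)) (hA (i+1) (by omega)))
        rw [h2, h1]
        push_cast
        ring
    have hq0 : ((q : ℕ) : ZMod 2) = 0 := by
      have : (2 : ℕ) ∣ q := by obtain ⟨c, hc⟩ := hqe; omega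
      exact (CharP.cast_eq_zero_iff (ZMod 2) 2 q).2 this
    have hsq : sig (f (tv q r hq hr q)) = sig (f (tv q r hq hr 0)) := by
      rw [key q le_rfl, hq0, add_zero]
    have hch := sig_adj (f.map_adj (theta_adj_chord hq hr)) (hA 0 (by omega)) (hA q le_rfl)
    rw [hsq] at hch
    exact zne _ hch
  have claimB : f (tv q r hq hr 0) = Wv a b ∨
      ∃ j, j < r ∧ f (tv q r hq hr (q + j)) = Wv a b := by
    by_contra hB
    push_neg at hB
    obtain ⟨h0, hj⟩ := hB
    have key : ∀ j, j < r →
        sig (f (tv q r hq hr (q + j))) = sig (f (tv q r hq hr q)) + (j : ZMod 2) := by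
      intro j hjr
      induction j with
      | zero => simp
      | succ j ih =>
        have h1 := ih (by omega)
        have hadj := f.map_adj (theta_adj_succ hq hr (by omega : (q + j) + 1 < q + r))
        have h2 := zflip _ _ (sig_adj hadj (hj j (by omega)) (hj (j+1) hjr))
        rw [show q + (j + 1) = (q + j) + 1 from rfl, h2, h1]
        push_cast
        ring
    have hr1 : ((r - 1 : ℕ) : ZMod 2) = 1 := by
      refine zone _ (fun h => ?_)
      have : (2 : ℕ) ∣ (r - 1) := (CharP.cast_eq_zero_iff (ZMod 2) 2 _).1 h
      obtain ⟨c, hc⟩ := hre; omega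
    have hlast := key (r - 1) (by omega)
    rw [hr1] at hlast
    have hch := sig_adj (f.map_adj (theta_adj_chord hq hr)) h0
      (by simpa using hj 0 (by omega))
    have hwr := sig_adj (f.map_adj (theta_adj_wrap hq hr))
      (by rw [show q + r - 1 = q + (r - 1) from by omega]; exact hj (r-1) (by omega)) h0
    rw [show q + r - 1 = q + (r - 1) from by omega, hlast] at hwr
    exact zcon _ _ hch hwr
  obtain ⟨i, hi, hiw⟩ := claimA

  rcases claimB with h0 | ⟨j, hjr, hjw⟩
  · -- f (tv 0) = W; neighbors tv 1, tv q, tv (q+r-1)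
    have a1 := f.map_adj (theta_adj_succ hq hr (by omega : 0 + 1 < q + r))
    have a2 := f.map_adj (theta_adj_chord hq hr)
    have a3 := (f.map_adj (theta_adj_wrap hq hr)).symm
    rw [show (0:ℕ) + 1 = 1 from rfl] at a1
    rw [h0] at a1 a2 a3
    refine pigeon hf (x := tv q r hq hr 1) (y := tv q r hq hr q) (z := tv q r hq hr (q+r-1))
      ?_ ?_ ?_ (w_adj ha hb a1) (w_adj ha hb a2) (w_adj ha hb a3) <;>
    · simp only [ne_eq, Fin.ext_iff, tv_eq hq hr (by omega : 1 < q + r),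
        tv_eq hq hr (by omega : q < q + r), tv_eq hq hr (by omega : q + r - 1 < q + r)]
      omega
  · -- f (tv q) = W
    have hiq : tv q r hq hr i = tv q r hq hr (q + j) := hf (hiw.trans hjw.symm)
    have : i = q + j := by
      have := congrArg Fin.val hiq
      rwa [tv_eq hq hr (by omega), tv_eq hq hr (by omega)] at this
    have hj0 : j = 0 := by omega
    subst hj0
    have hqw : f (tv q r hq hr q) = Wv a b := by simpa using hjw
    have a1 := f.map_adj (theta_adj_succ hq hr (by omega : (q - 1) + 1 < q + r))
    rw [show q - 1 + 1 = q from by omega] at a1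
    have a1 := a1.symm
    have a2 := f.map_adj (theta_adj_succ hq hr (by omega : q + 1 < q + r))
    have a3 := (f.map_adj (theta_adj_chord hq hr)).symm
    rw [hqw] at a1 a2 a3
    refine pigeon hf (x := tv q r hq hr (q-1)) (y := tv q r hq hr (q+1)) (z := tv q r hq hr 0)
      ?_ ?_ ?_ (w_adj ha hb a1) (w_adj ha hb a2) (w_adj ha hb a3) <;>
    · simp only [ne_eq, Fin.ext_iff, tv_eq hq hr (by omega : q - 1 < q + r),
        tv_eq hq hr (by omega : q + 1 < q + r), tv_eq hq hr (by omega : 0 < q + r)]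
      omega

lemma part2 {a b : ℕ} (ha : 0 < a) (hb : 0 < b) :
    (KbulK3 a b).edgeFinset.card = a * b + 2 := by
  classical
  have hEq : (KbulK3 a b).edgeFinset =
      ((Finset.univ : Finset (Fin a × Fin b)).image
        fun p => s(Sum.inl p.1, Sum.inr (Sum.inl p.2))) ∪
      {s(Sum.inl ⟨0, ha⟩, Wv a b), s(Sum.inr (Sum.inl ⟨0, hb⟩), Wv a b)} := by
    ext e
    induction e with
    | _ x y =>
      constructor
      · intro he
        rw [mem_edgeFinset, mem_edgeSet, KbulK3, SimpleGraph.fromRel_adj] at he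
        obtain ⟨hne, h | h⟩ := he <;>
          rcases h with ⟨x',y',rfl,rfl⟩|⟨x',w',h0,rfl,rfl⟩|⟨y',w',h0,rfl,rfl⟩
        · exact Finset.mem_union_left _ (Finset.mem_image.2 ⟨(x',y'), Finset.mem_univ _, rfl⟩)
        · obtain rfl : x' = (⟨0, ha⟩ : Fin a) := Fin.ext h0
          obtain rfl : w' = (0 : Fin 1) := Subsingleton.elim _ _
          exact Finset.mem_union_right _ (by simp [Wv])
        · obtain rfl : y' = (⟨0, hb⟩ : Fin b) := Fin.ext h0
          obtain rfl : w' = (0 : Fin 1) := Subsingleton.elim _ _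
          exact Finset.mem_union_right _ (by simp [Wv])
        · rw [show s(Sum.inr (Sum.inl y'), Sum.inl x') = s(Sum.inl x', Sum.inr (Sum.inl y'))
            from Sym2.eq_swap]
          exact Finset.mem_union_left _ (Finset.mem_image.2 ⟨(x',y'), Finset.mem_univ _, rfl⟩)
        · rw [show s(Sum.inr (Sum.inr w'), Sum.inl x') = s(Sum.inl x', Sum.inr (Sum.inr w'))
            from Sym2.eq_swap]
          obtain rfl : x' = (⟨0, ha⟩ : Fin a) := Fin.ext h0
          obtain rfl : w' = (0 : Fin 1) := Subsingleton.elim _ _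
          exact Finset.mem_union_right _ (by simp [Wv])
        · rw [show s(Sum.inr (Sum.inr w'), Sum.inr (Sum.inl y')) =
              s(Sum.inr (Sum.inl y'), Sum.inr (Sum.inr w')) from Sym2.eq_swap]
          obtain rfl : y' = (⟨0, hb⟩ : Fin b) := Fin.ext h0
          obtain rfl : w' = (0 : Fin 1) := Subsingleton.elim _ _
          exact Finset.mem_union_right _ (by simp [Wv])
      · intro he
        rw [Finset.mem_union, Finset.mem_image, Finset.mem_insert, Finset.mem_singleton] at he
        rw [mem_edgeFinset]
        rcases he with ⟨p, -, hp⟩ | h | h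
        · rw [← hp, mem_edgeSet, KbulK3, SimpleGraph.fromRel_adj]
          exact ⟨by simp, Or.inl (Or.inl ⟨p.1, p.2, rfl, rfl⟩)⟩
        · rw [h, mem_edgeSet, KbulK3, SimpleGraph.fromRel_adj]
          exact ⟨by simp [Wv], Or.inl (Or.inr (Or.inl ⟨⟨0, ha⟩, 0, rfl, rfl, rfl⟩))⟩
        · rw [h, mem_edgeSet, KbulK3, SimpleGraph.fromRel_adj]
          exact ⟨by simp [Wv], Or.inl (Or.inr (Or.inr ⟨⟨0, hb⟩, 0, rfl, rfl, rfl⟩))⟩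
  rw [hEq]
  have hdisj : Disjoint
      ((Finset.univ : Finset (Fin a × Fin b)).image
        fun p => s(Sum.inl p.1, Sum.inr (Sum.inl p.2)))
      ({s(Sum.inl ⟨0, ha⟩, Wv a b), s(Sum.inr (Sum.inl ⟨0, hb⟩), Wv a b)} :
        Finset (Sym2 (Fin a ⊕ Fin b ⊕ Fin 1))) := by
    rw [Finset.disjoint_left]
    rintro e he hmem
    obtain ⟨p, -, rfl⟩ := Finset.mem_image.1 he
    rw [Finset.mem_insert, Finset.mem_singleton] at hmem
    rcases hmem with h | h <;> simp [Sym2.eq_iff, Wv] at h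
  rw [Finset.card_union_of_disjoint hdisj]
  have h1 : ((Finset.univ : Finset (Fin a × Fin b)).image
      fun p => (s(Sum.inl p.1, Sum.inr (Sum.inl p.2)) :
        Sym2 (Fin a ⊕ Fin b ⊕ Fin 1))).card = a * b := by
    rw [Finset.card_image_of_injective _ (fun p q h => ?_), Finset.card_univ,
      Fintype.card_prod, Fintype.card_fin, Fintype.card_fin]
    simp only [Sym2.eq_iff] at h
    rcases h with ⟨h1, h2⟩ | ⟨h1, h2⟩
    · exact Prod.ext (Sum.inl.inj h1) (Sum.inl.inj (Sum.inr.inj h2))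
    · exact absurd h1 (by simp)
  have h2 : ({s(Sum.inl ⟨0, ha⟩, Wv a b), s(Sum.inr (Sum.inl ⟨0, hb⟩), Wv a b)} :
      Finset (Sym2 (Fin a ⊕ Fin b ⊕ Fin 1))).card = 2 := by
    exact Finset.card_pair (by simp [Sym2.eq_iff, Wv])
  rw [h1, h2]

/-- `K_{⌈(n−1)/2⌉,⌊(n−1)/2⌋} • K₃` is `θ(1,q,r)`-free whenever `q, r ≥ 2` are both even,
and has exactly `⌊(n−1)²/4⌋ + 2` edges. -/
theorem stmt10 (n q r : ℕ) (hn : 3 ≤ n) (hq : 2 ≤ q) (hr : 2 ≤ r)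
    (hqe : Even q) (hre : Even r) :
    (¬ ∃ f : theta q r →g KbulK3 (n / 2) ((n - 1) / 2), Function.Injective f) ∧
    (KbulK3 (n / 2) ((n - 1) / 2)).edgeFinset.card = (n - 1) ^ 2 / 4 + 2 := by
  have ha : 0 < n / 2 := by omega
  have hb : 0 < (n - 1) / 2 := by omega
  refine ⟨part1 hq hr hqe hre ha hb, ?_⟩
  rw [part2 ha hb]
  congr 1
  rcases Nat.even_or_odd n with ⟨k, hk⟩ | ⟨k, hk⟩
  · obtain ⟨m, rfl⟩ : ∃ m, k = m + 1 := ⟨k - 1, by omega⟩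
    have e1 : n / 2 = m + 1 := by omega
    have e2 : (n - 1) / 2 = m := by omega
    have e3 : (n - 1) ^ 2 = 4 * (m * m + m) + 1 := by
      have h5 : n - 1 = 2 * m + 1 := by omega
      rw [h5]; ring
    rw [e1, e2, e3, Nat.mul_add_div (by norm_num)]
    norm_num
    ring
  · have e1 : n / 2 = k := by omega
    have e2 : (n - 1) / 2 = k := by omega
    have e3 : (n - 1) ^ 2 = 4 * (k * k) := by
      have h5 : n - 1 = 2 * k := by omega
      rw [h5]; ring
    rw [e1, e2, e3, Nat.mul_div_cancel_left _ (by norm_num : 0 < 4)]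
end

section
/- For any graph G and any vertex u, ρ(G)² ≤ ρ(G − u)² + 2·d_G(u), where ρ denotes the adjacency spectral radius. -/
open Finset SimpleGraph
open scoped Classical
open scoped Matrix

set_option linter.unusedSectionVars false

section Helpers
open Matrix

variable {n : Type*} [Fintype n] [DecidableEq n]

omit [DecidableEq n] in
lemma real_inner_eq_dot (x y : EuclideanSpace ℝ n) :
    (inner ℝ x y : ℝ) = (x : n → ℝ) ⬝ᵥ (y : n → ℝ) := by
  simp [PiLp.inner_apply, dotProduct, RCLike.inner_apply, mul_comm]

lemma star_mulVec_dot (U : Matrix n n ℝ) (hU : U ∈ Matrix.unitaryGroup n ℝ)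
    (x y : n → ℝ) : (U *ᵥ x) ⬝ᵥ (U *ᵥ y) = x ⬝ᵥ y := by
  rw [dotProduct_mulVec, ← Matrix.mulVec_transpose]
  have h : Uᵀ = star U := by
    ext i j; simp [Matrix.star_eq_conjTranspose, Matrix.conjTranspose_apply]
  rw [h, Matrix.mulVec_mulVec, (Matrix.mem_unitaryGroup_iff'.mp hU)]
  simp

lemma spectral_decomp (A : Matrix n n ℝ) (hA : A.IsHermitian) (x : n → ℝ) :
    A *ᵥ x = (hA.eigenvectorUnitary : Matrix n n ℝ) *ᵥ
      (fun i => hA.eigenvalues i * ((star (hA.eigenvectorUnitary : Matrix n n ℝ) *ᵥ x) i)) := by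
  set U := (hA.eigenvectorUnitary : Matrix n n ℝ) with hU
  set D := Matrix.diagonal ((RCLike.ofReal ∘ hA.eigenvalues : n → ℝ)) with hD
  calc A *ᵥ x = (U * (D * star U)) *ᵥ x := by
        rw [← Matrix.mul_assoc]; conv_lhs => rw [hA.spectral_theorem]
        rfl
    _ = U *ᵥ (D *ᵥ (star U *ᵥ x)) := by simp only [Matrix.mulVec_mulVec, Matrix.mul_assoc]
    _ = _ := by
        have h2 : (D *ᵥ (star U *ᵥ x)) = fun i => hA.eigenvalues i * ((star U *ᵥ x) i) := by
          ext i
          simp [hD, Matrix.mulVec_diagonal]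
        rw [h2]

variable (A : Matrix n n ℝ) (hA : A.IsHermitian)

lemma dot_symm_matrix (hA : A.IsHermitian) (v w : n → ℝ) : v ⬝ᵥ (A *ᵥ w) = (A *ᵥ v) ⬝ᵥ w := by
  rw [dotProduct_mulVec, ← Matrix.mulVec_transpose]
  congr 1
  have hT : Aᵀ = A := by
    ext i j
    have := congrFun (congrFun hA i) j
    simpa [Matrix.conjTranspose_apply] using this
  rw [hT]

lemma dot_z_self (x : n → ℝ) :
    x ⬝ᵥ x = ∑ i, ((star (hA.eigenvectorUnitary : Matrix n n ℝ) *ᵥ x) i) ^ 2 := by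
  set U := (hA.eigenvectorUnitary : Matrix n n ℝ) with hU
  set z := star U *ᵥ x with hz
  have hx : x = U *ᵥ z := by
    rw [hz, Matrix.mulVec_mulVec, Matrix.mem_unitaryGroup_iff.mp hA.eigenvectorUnitary.2]
    simp
  calc x ⬝ᵥ x = (U *ᵥ z) ⬝ᵥ (U *ᵥ z) := by rw [← hx]
    _ = z ⬝ᵥ z := star_mulVec_dot U hA.eigenvectorUnitary.2 z z
    _ = ∑ i, (z i) ^ 2 := by simp [dotProduct, sq]

lemma dot_mulVec_eq_sum (x : n → ℝ) :
    x ⬝ᵥ (A *ᵥ x) = ∑ i, hA.eigenvalues i *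
      ((star (hA.eigenvectorUnitary : Matrix n n ℝ) *ᵥ x) i) ^ 2 := by
  set U := (hA.eigenvectorUnitary : Matrix n n ℝ) with hU
  set z := star U *ᵥ x with hz
  have hx : x = U *ᵥ z := by
    rw [hz, Matrix.mulVec_mulVec, Matrix.mem_unitaryGroup_iff.mp hA.eigenvectorUnitary.2]
    simp
  calc x ⬝ᵥ (A *ᵥ x)
      = (U *ᵥ z) ⬝ᵥ (U *ᵥ (fun i => hA.eigenvalues i * z i)) := by
        rw [spectral_decomp A hA x, ← hx]
    _ = z ⬝ᵥ (fun i => hA.eigenvalues i * z i) :=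
        star_mulVec_dot U hA.eigenvectorUnitary.2 _ _
    _ = ∑ i, hA.eigenvalues i * (z i) ^ 2 := by
        simp [dotProduct, sq]
        apply Finset.sum_congr rfl
        intro i _
        ring

lemma mulVec_dot_mulVec_eq_sum (x : n → ℝ) :
    (A *ᵥ x) ⬝ᵥ (A *ᵥ x) = ∑ i, (hA.eigenvalues i) ^ 2 *
      ((star (hA.eigenvectorUnitary : Matrix n n ℝ) *ᵥ x) i) ^ 2 := by
  set U := (hA.eigenvectorUnitary : Matrix n n ℝ) with hU
  set z := star U *ᵥ x with hz
  calc (A *ᵥ x) ⬝ᵥ (A *ᵥ x)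
      = (U *ᵥ (fun i => hA.eigenvalues i * z i)) ⬝ᵥ (U *ᵥ (fun i => hA.eigenvalues i * z i)) := by
        rw [spectral_decomp A hA x]
    _ = (fun i => hA.eigenvalues i * z i) ⬝ᵥ (fun i => hA.eigenvalues i * z i) :=
        star_mulVec_dot U hA.eigenvectorUnitary.2 _ _
    _ = ∑ i, (hA.eigenvalues i) ^ 2 * (z i) ^ 2 := by
        simp [dotProduct, sq]
        apply Finset.sum_congr rfl
        intro i _
        ring

lemma rayleigh_le (r : ℝ) (hr : ∀ i, hA.eigenvalues i ≤ r) (x : n → ℝ) :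
    x ⬝ᵥ (A *ᵥ x) ≤ r * (x ⬝ᵥ x) := by
  rw [dot_mulVec_eq_sum A hA x, dot_z_self A hA x, Finset.mul_sum]
  apply Finset.sum_le_sum
  intro i _
  exact mul_le_mul_of_nonneg_right (hr i) (sq_nonneg _)

lemma normSq_mulVec_le (r2 : ℝ) (hr : ∀ i, (hA.eigenvalues i) ^ 2 ≤ r2) (x : n → ℝ) :
    (A *ᵥ x) ⬝ᵥ (A *ᵥ x) ≤ r2 * (x ⬝ᵥ x) := by
  rw [mulVec_dot_mulVec_eq_sum A hA x, dot_z_self A hA x, Finset.mul_sum]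
  apply Finset.sum_le_sum
  intro i _
  exact mul_le_mul_of_nonneg_right (hr i) (sq_nonneg _)

lemma eig_set_eq_range (A : Matrix n n ℝ) (hA : A.IsHermitian) :
    {t : ℝ | ∃ x : n → ℝ, x ≠ 0 ∧ A *ᵥ x = t • x} = Set.range hA.eigenvalues := by
  ext t
  constructor
  · rintro ⟨x, hx0, hx⟩
    by_contra ht
    apply hx0
    set b := hA.eigenvectorBasis with hb
    have hc : ∀ i, (⇑(b i) : n → ℝ) ⬝ᵥ x = 0 := by
      intro i
      have h1 : hA.eigenvalues i * ((⇑(b i) : n → ℝ) ⬝ᵥ x) = t * ((⇑(b i) : n → ℝ) ⬝ᵥ x) := by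
        calc hA.eigenvalues i * ((⇑(b i) : n → ℝ) ⬝ᵥ x)
            = (hA.eigenvalues i • (⇑(b i) : n → ℝ)) ⬝ᵥ x := by
              rw [smul_dotProduct]; rfl
          _ = (A *ᵥ ⇑(b i)) ⬝ᵥ x := by rw [hA.mulVec_eigenvectorBasis i]
          _ = (⇑(b i) : n → ℝ) ⬝ᵥ (A *ᵥ x) := (dot_symm_matrix A hA _ _).symm
          _ = (⇑(b i) : n → ℝ) ⬝ᵥ (t • x) := by rw [hx]
          _ = t * ((⇑(b i) : n → ℝ) ⬝ᵥ x) := by rw [dotProduct_smul]; rfl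
      have hne : hA.eigenvalues i ≠ t := fun h => ht ⟨i, h⟩
      have h2 : (hA.eigenvalues i - t) * ((⇑(b i) : n → ℝ) ⬝ᵥ x) = 0 := by
        rw [sub_mul, h1]
        ring
      rcases mul_eq_zero.mp h2 with h | h
      · exact absurd (sub_eq_zero.mp h) hne
      · exact h
    have hrepr : b.repr (WithLp.toLp 2 x) = 0 := by
      ext i
      rw [b.repr_apply_apply]
      rw [real_inner_eq_dot]
      exact hc i
    have := b.repr.map_eq_zero_iff.mp hrepr
    exact congrArg WithLp.ofLp this
  · rintro ⟨i, rfl⟩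
    refine ⟨⇑(hA.eigenvectorBasis i), ?_, hA.mulVec_eigenvectorBasis i⟩
    intro h
    exact hA.eigenvectorBasis.orthonormal.ne_zero i (by ext j; exact congrFun h j)

lemma sq_eig_le (A : Matrix n n ℝ) (hA : A.IsHermitian) (hnn : ∀ i j, 0 ≤ A i j)
    (r : ℝ) (hr : ∀ i, hA.eigenvalues i ≤ r) (i : n) :
    (hA.eigenvalues i) ^ 2 ≤ r ^ 2 := by
  set v : n → ℝ := ⇑(hA.eigenvectorBasis i) with hv
  have hv1 : v ⬝ᵥ v = 1 := by
    have h1 : (inner ℝ (hA.eigenvectorBasis i) (hA.eigenvectorBasis i) : ℝ) = 1 := by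
      rw [real_inner_self_eq_norm_sq, hA.eigenvectorBasis.orthonormal.1 i]
      norm_num
    rw [← real_inner_eq_dot]
    exact h1
  have hlam : hA.eigenvalues i = v ⬝ᵥ (A *ᵥ v) := by
    rw [hv, hA.mulVec_eigenvectorBasis i, dotProduct_smul]
    change hA.eigenvalues i = hA.eigenvalues i * (v ⬝ᵥ v)
    rw [hv1, mul_one]
  set w : n → ℝ := fun j => |v j| with hw
  have hww : w ⬝ᵥ w = 1 := by
    rw [← hv1]
    simp [dotProduct, hw, abs_mul_abs_self]
  have habs : -(v ⬝ᵥ (A *ᵥ v)) ≤ w ⬝ᵥ (A *ᵥ w) := by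
    have h1 : ∀ y : n → ℝ, y ⬝ᵥ (A *ᵥ y) = ∑ j, ∑ k, A j k * (y j * y k) := by
      intro y
      simp only [dotProduct, Matrix.mulVec, Finset.mul_sum]
      apply Finset.sum_congr rfl; intro j _
      apply Finset.sum_congr rfl; intro k _
      ring
    rw [h1, h1, ← Finset.sum_neg_distrib]
    apply Finset.sum_le_sum
    intro j _
    rw [← Finset.sum_neg_distrib]
    apply Finset.sum_le_sum
    intro k _
    have := hnn j k
    have h2 : -(v j * v k) ≤ |v j| * |v k| := by
      rw [← abs_mul]
      exact neg_le_abs _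
    calc -(A j k * (v j * v k)) = A j k * (-(v j * v k)) := by ring
      _ ≤ A j k * (|v j| * |v k|) := mul_le_mul_of_nonneg_left h2 this
      _ = A j k * (w j * w k) := rfl
  have hray := rayleigh_le A hA r hr w
  rw [hww, mul_one] at hray
  have hneg : -r ≤ hA.eigenvalues i := by
    rw [hlam]
    nlinarith [le_trans habs hray]
  exact sq_le_sq' hneg (hr i)

end Helpers

/-- The adjacency spectral radius of a finite simple graph: the largest real eigenvalue of
its adjacency matrix (as the supremum of the set of real eigenvalues). -/
noncomputable def specRad {V : Type*} [Fintype V] (G : SimpleGraph V) : ℝ :=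
  sSup {t : ℝ | ∃ x : V → ℝ, x ≠ 0 ∧ (G.adjMatrix ℝ).mulVec x = t • x}

/-- Lemma 3.3 (Li–Ning): for any graph `G` and vertex `u`,
`ρ(G)² ≤ ρ(G − u)² + 2 d_G(u)`. -/
theorem stmt16 {V : Type*} [Fintype V] (G : SimpleGraph V) (u : V) :
    specRad G ^ 2 ≤ specRad (G.induce {v : V | v ≠ u}) ^ 2 + 2 * (G.degree u : ℝ) := by
  classical
  have hA : (G.adjMatrix ℝ).IsHermitian := by
    ext i j
    simp [Matrix.conjTranspose_apply, SimpleGraph.adj_comm]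
  set G' := G.induce {v : V | v ≠ u} with hG'def
  have hB : (G'.adjMatrix ℝ).IsHermitian := by
    ext i j
    simp [Matrix.conjTranspose_apply, SimpleGraph.adj_comm]
  have hSG := eig_set_eq_range (G.adjMatrix ℝ) hA
  have hSB := eig_set_eq_range (G'.adjMatrix ℝ) hB
  have hVne : Nonempty V := ⟨u⟩
  set r := specRad G with hr
  set C := specRad G' with hC
  set d : ℝ := (G.degree u : ℝ) with hd
  have hd0 : (0:ℝ) ≤ d := Nat.cast_nonneg _
  -- r is an eigenvalue of A
  obtain ⟨x, hx0, hx⟩ : ∃ x : V → ℝ, x ≠ 0 ∧ (G.adjMatrix ℝ) *ᵥ x = r • x := by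
    have hmem : r ∈ {t : ℝ | ∃ x : V → ℝ, x ≠ 0 ∧ (G.adjMatrix ℝ).mulVec x = t • x} := by
      rw [hr, specRad, hSG]
      exact (Set.range_nonempty _).csSup_mem (Set.finite_range _)
    exact hmem
  -- C dominates eigenvalues of B
  have hCk : ∀ i, hB.eigenvalues i ≤ C := by
    intro i
    rw [hC, specRad]
    have hmem : hB.eigenvalues i ∈ {t : ℝ | ∃ x, x ≠ 0 ∧ (G'.adjMatrix ℝ).mulVec x = t • x} := by
      rw [hSB]; exact ⟨i, rfl⟩
    exact le_csSup (hSB ▸ (Set.finite_range hB.eigenvalues).bddAbove) hmem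
  have hC2 : ∀ i, (hB.eigenvalues i) ^ 2 ≤ C ^ 2 := by
    intro i
    refine sq_eig_le _ hB ?_ C hCk i
    intro i j
    simp only [adjMatrix_apply]
    split_ifs <;> norm_num
  -- the truncated eigenvector
  set y : {v : V | v ≠ u} → ℝ := fun v => x ↑v with hy
  have hsub : ∀ f : V → ℝ, ∑ v : {v : V | v ≠ u}, f ↑v = ∑ v ∈ Finset.univ.erase u, f v := by
    intro f
    exact (Finset.sum_subtype _ (fun v => by simp [Finset.mem_erase]) f).symm
  set s : ℝ := ∑ v ∈ Finset.univ.erase u, (x v) ^ 2 with hs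
  set tt : ℝ := (x u) ^ 2 with htt
  have hs0 : (0:ℝ) ≤ s := Finset.sum_nonneg fun v _ => sq_nonneg _
  have ht0 : (0:ℝ) ≤ tt := sq_nonneg _
  have hNsum : ∑ v, (x v) ^ 2 = s + tt := (Finset.sum_erase_add _ _ (Finset.mem_univ u)).symm
  have hNpos : 0 < s + tt := by
    rw [← hNsum]
    obtain ⟨v, hv⟩ := Function.ne_iff.mp hx0
    exact Finset.sum_pos' (fun w _ => sq_nonneg _) ⟨v, Finset.mem_univ v, by
      have h := abs_pos.mpr hv
      nlinarith [sq_abs (x v)]⟩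
  -- pointwise eigen equation
  have hxp : ∀ v, ∑ w, (G.adjMatrix ℝ) v w * x w = r * x v := by
    intro v
    have h1 := congrFun hx v
    simpa [Matrix.mulVec, dotProduct] using h1
  -- degree sum
  have hdsum : ∑ v ∈ Finset.univ.erase u, ((G.adjMatrix ℝ) u v) ^ 2 = d := by
    rw [Finset.sum_erase _ (by simp)]
    have h1 : ∀ v, ((G.adjMatrix ℝ) u v) ^ 2 = if G.Adj u v then (1:ℝ) else 0 := by
      intro v
      simp only [adjMatrix_apply]
      split_ifs <;> norm_num
    rw [Finset.sum_congr rfl fun v _ => h1 v, Finset.sum_boole, hd]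
    congr 1
    rw [SimpleGraph.degree, SimpleGraph.neighborFinset_eq_filter]
  -- row sum against x
  have hP : ∑ v ∈ Finset.univ.erase u, (G.adjMatrix ℝ) u v * x v = r * x u := by
    rw [Finset.sum_erase _ (by simp)]
    exact hxp u
  -- the deleted-graph mulVec formula
  have hBy : ∀ v : {v : V | v ≠ u}, ((G'.adjMatrix ℝ) *ᵥ y) v
      = r * x ↑v - (G.adjMatrix ℝ) ↑v u * x u := by
    intro v
    have h1 : ((G'.adjMatrix ℝ) *ᵥ y) v = ∑ w : {v : V | v ≠ u}, (G.adjMatrix ℝ) ↑v ↑w * x ↑w := by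
      simp only [Matrix.mulVec, dotProduct, hy]
      apply Finset.sum_congr rfl
      intro w _
      congr 1
      all_goals simp [hG'def, SimpleGraph.comap_adj]
    rw [h1, hsub (fun w => (G.adjMatrix ℝ) ↑v w * x w)]
    have h2 := Finset.sum_erase_add Finset.univ (fun w => (G.adjMatrix ℝ) ↑v w * x w)
      (Finset.mem_univ u)
    have h3 := hxp ↑v
    linarith
  -- squared norm of B y
  have hnorm : ((G'.adjMatrix ℝ) *ᵥ y) ⬝ᵥ ((G'.adjMatrix ℝ) *ᵥ y)
      = r ^ 2 * s - 2 * r ^ 2 * tt + d * tt := by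
    have h1 : ((G'.adjMatrix ℝ) *ᵥ y) ⬝ᵥ ((G'.adjMatrix ℝ) *ᵥ y)
        = ∑ v : {v : V | v ≠ u}, (r * x ↑v - (G.adjMatrix ℝ) ↑v u * x u) ^ 2 := by
      simp only [dotProduct]
      apply Finset.sum_congr rfl
      intro v _
      rw [hBy v, sq]
    rw [h1, hsub (fun v => (r * x v - (G.adjMatrix ℝ) v u * x u) ^ 2)]
    have h2 : ∀ v ∈ Finset.univ.erase u,
        (r * x v - (G.adjMatrix ℝ) v u * x u) ^ 2
        = r ^ 2 * (x v) ^ 2 - 2 * r * x u * ((G.adjMatrix ℝ) u v * x v)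
          + (x u) ^ 2 * ((G.adjMatrix ℝ) u v) ^ 2 := by
      intro v _
      have hsym : (G.adjMatrix ℝ) v u = (G.adjMatrix ℝ) u v := by
        simp [SimpleGraph.adj_comm]
      rw [hsym]
      ring
    rw [Finset.sum_congr rfl h2]
    rw [Finset.sum_add_distrib, Finset.sum_sub_distrib, ← Finset.mul_sum, ← Finset.mul_sum,
      ← Finset.mul_sum, hP, hdsum]
    rw [← hs]
    ring
  -- y-norm
  have hyy : y ⬝ᵥ y = s := by
    have h1 : y ⬝ᵥ y = ∑ v : {v : V | v ≠ u}, (x ↑v) ^ 2 := by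
      simp only [dotProduct, hy]
      apply Finset.sum_congr rfl
      intro v _
      rw [sq]
    rw [h1, hsub (fun v => (x v) ^ 2)]
  -- F1
  have hF1 : r ^ 2 * s - 2 * r ^ 2 * tt + d * tt ≤ C ^ 2 * s := by
    have h := normSq_mulVec_le (G'.adjMatrix ℝ) hB (C ^ 2) hC2 y
    rw [hnorm, hyy] at h
    exact h
  -- F2 : Cauchy-Schwarz
  have hF2 : r ^ 2 * tt ≤ d * s := by
    have h := Finset.sum_mul_sq_le_sq_mul_sq (Finset.univ.erase u)
      (fun v => (G.adjMatrix ℝ) u v) (fun v => x v)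
    rw [hP, hdsum] at h
    calc r ^ 2 * tt = (r * x u) ^ 2 := by rw [htt]; ring
      _ ≤ d * s := h
  -- conclude
  rcases eq_or_lt_of_le hs0 with hseq | hspos
  · have httpos : 0 < tt := by linarith
    have hr2 : r ^ 2 ≤ 0 := by nlinarith
    nlinarith [sq_nonneg C]
  · nlinarith [hF1, hF2, mul_nonneg hd0 ht0, sq_nonneg C, mul_nonneg (sq_nonneg C) ht0]
end

section
/- Let G be a non-bipartite graph on n vertices with no odd cycle of length ≤ 2k+1 (k ≥ 1). Then e(G) ≤ ⌊(n − 2k + 1)²/4⌋ + 2k − 1. -/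
open Finset SimpleGraph
open scoped Classical


lemma colorable_two_of_no_odd_closed {V : Type*} {G : SimpleGraph V}
    (H : ∀ (u : V) (w : G.Walk u u), ¬ Odd w.length) : G.Colorable 2 := by
  classical
  let rep : G.ConnectedComponent → V := fun c => Classical.choose (Quot.exists_rep c)
  have hrep : ∀ c, G.connectedComponentMk (rep c) = c := fun c =>
    Classical.choose_spec (Quot.exists_rep c)
  have hreach : ∀ v : V, G.Reachable (rep (G.connectedComponentMk v)) v := fun v =>
    ConnectedComponent.exact (hrep _)
  let wlk : ∀ v : V, G.Walk (rep (G.connectedComponentMk v)) v := fun v => (hreach v).some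
  let col : V → Bool := fun v => decide (Odd (wlk v).length)
  have CB : G.Coloring Bool := Coloring.mk col (by
    intro u v hadj hcol
    have hcomp : G.connectedComponentMk u = G.connectedComponentMk v :=
      ConnectedComponent.sound hadj.reachable
    have hrr : rep (G.connectedComponentMk v) = rep (G.connectedComponentMk u) :=
      (congrArg rep hcomp).symm
    let q' : G.Walk (rep (G.connectedComponentMk u)) v := (wlk v).copy hrr rfl
    have hq' : q'.length = (wlk v).length := Walk.length_copy _ _ _
    have hparity : (Odd (wlk u).length ↔ Odd (wlk v).length) := by
      simpa [col, decide_eq_decide] using hcol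
    apply H _ ((wlk u).append (Walk.cons hadj q'.reverse))
    rw [Walk.length_append, Walk.length_cons, Walk.length_reverse, hq']
    rcases Nat.even_or_odd (wlk u).length with he | ho
    · have hev : Even (wlk v).length := by
        rcases Nat.even_or_odd (wlk v).length with h | h
        · exact h
        · exact absurd (hparity.mpr h) (Nat.not_odd_iff_even.mpr he)
      rcases he with ⟨a, ha⟩; rcases hev with ⟨b, hb⟩
      exact ⟨a + b, by omega⟩
    · have hov : Odd (wlk v).length := hparity.mp ho
      rcases ho with ⟨a, ha⟩; rcases hov with ⟨b, hb⟩
      exact ⟨a + b + 1, by omega⟩)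
  have h2 := CB.colorable
  simpa using h2


lemma exists_odd_cycle_of_odd_closed {V : Type*} {G : SimpleGraph V} :
    ∀ (L : ℕ) (u : V) (w : G.Walk u u), w.length = L → Odd L →
    ∃ (x : V) (c : G.Walk x x), c.IsCycle ∧ Odd c.length ∧ c.length ≤ L := by
  intro L
  induction L using Nat.strong_induction_on with
  | _ L IH =>
  intro u w hwL hodd
  classical
  by_cases hnodup : w.support.tail.Nodup
  · -- w is a cycle
    have hpos : 0 < w.length := by
      rcases hodd with ⟨a, ha⟩; omega
    cases w with
    | nil => simp at hpos
    | @cons _ y _ h p =>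
      have hnodup' : p.support.Nodup := by simpa using hnodup
      have hpath : p.IsPath := (Walk.isPath_def p).mpr hnodup'
      have hne : s(u, y) ∉ p.edges := by
        intro hmem
        cases p with
        | nil => simp at hmem
        | @cons _ z _ h' q =>
          rw [Walk.edges_cons, List.mem_cons] at hmem
          rcases hmem with heq | hmem
          · have huz : u = z := by
              rw [Sym2.eq_iff] at heq
              rcases heq with ⟨h1, h2⟩ | ⟨h1, h2⟩
              · exact absurd h1 (G.ne_of_adj h)
              · exact h1
            subst huz
            have hq : q.IsPath := hpath.of_cons
            have hq0 : q.length = 0 := by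
              cases q with
              | nil => rfl
              | @cons _ t _ h'' r =>
                exfalso
                have hsupp : (Walk.cons h'' r).support.Nodup := (Walk.isPath_def _).mp hq
                rw [Walk.support_cons, List.nodup_cons] at hsupp
                exact hsupp.1 r.end_mem_support
            have hL2 : L = 2 := by
              rw [← hwL]
              simp [Walk.length_cons, hq0]
            rw [hL2] at hodd
            rcases hodd with ⟨a, ha⟩
            omega
          · have : y ∈ q.support := Walk.snd_mem_support_of_mem_edges q hmem
            have hnd : (Walk.cons h' q).support.Nodup := hnodup'
            rw [Walk.support_cons, List.nodup_cons] at hnd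
            exact hnd.1 this
      have hcyc : (Walk.cons h p).IsCycle := (Walk.cons_isCycle_iff p h).mpr ⟨hpath, hne⟩
      exact ⟨u, Walk.cons h p, hcyc, hwL ▸ hodd, le_of_eq hwL⟩
  · -- repeated vertex: split
    obtain ⟨x, hdup⟩ := List.exists_duplicate_iff_not_nodup.mpr hnodup
    have hcount : 2 ≤ w.support.tail.count x := List.duplicate_iff_two_le_count.mp hdup
    have hx : x ∈ w.support := List.mem_of_mem_tail hdup.mem
    set w' := w.rotate x hx with hw'
    have hlen' : w'.length = w.length := by
      have h1 := congrArg Walk.length (w.take_spec hx)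
      rw [Walk.length_append] at h1
      rw [hw', Walk.rotate, Walk.length_append]
      omega
    have hcount' : 2 ≤ w'.support.tail.count x := by
      have hperm : w'.support.tail ~r w.support.tail := w.support_rotate x hx
      rw [hperm.perm.count_eq]
      exact hcount
    have hpos : 0 < w'.length := by rw [hlen', hwL]; rcases hodd with ⟨a, ha⟩; omega
    cases hw'' : w' with
    | nil => rw [hw''] at hpos; simp at hpos
    | @cons _ y _ h p =>
      have hxp : x ∈ p.support := by
        have : 2 ≤ p.support.count x := by
          have := hcount'
          rw [hw''] at this
          simpa using this
        exact List.count_pos_iff.mp (by omega)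
      set q := p.takeUntil x hxp with hq
      set d := p.dropUntil x hxp with hd
      have hsplit : q.append d = p := p.take_spec hxp
      have hlsum : q.length + d.length = p.length := by
        have := congrArg Walk.length hsplit
        rw [Walk.length_append] at this
        omega
      have hdpos : 0 < d.length := by
        by_contra h0
        have hd0 : d.length = 0 := by omega
        have hcq : q.support.count x = 1 := p.count_support_takeUntil_eq_one hxp
        have hdt : d.support.tail = [] := by
          have hdl : d.support.length = 1 := by rw [Walk.length_support, hd0]
          cases hds : d.support with
          | nil => simp [hds] at hdl
          | cons a l => rw [hds] at hdl; simp at hdl; simp [hdl]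
        have h2 : 2 ≤ p.support.count x := by
          rw [hw''] at hcount'
          simpa using hcount'
        rw [← hsplit, Walk.support_append, hdt, List.append_nil, hcq] at h2
        omega
      have hLlen : p.length + 1 = L := by
        have : w'.length = L := by rw [hlen', hwL]
        rw [hw''] at this
        simpa using this
      -- two closed walks
      have hsum2 : (q.length + 1) + d.length = L := by omega
      rcases Nat.even_or_odd (q.length + 1) with he | ho
      · -- then d odd
        have hdo : Odd d.length := by
          rcases he with ⟨a, ha⟩; rcases hodd with ⟨b, hb⟩
          refine ⟨b - a, by omega⟩
        have hdlt : d.length < L := by omega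
        obtain ⟨z, c, hc, hco, hcl⟩ := IH d.length hdlt x d rfl hdo
        exact ⟨z, c, hc, hco, le_trans hcl (le_of_lt hdlt)⟩
      · have hlt : q.length + 1 < L := by omega
        obtain ⟨z, c, hc, hco, hcl⟩ := IH (q.length + 1) hlt x (Walk.cons h q) (by simp) ho
        exact ⟨z, c, hc, hco, le_trans hcl (le_of_lt hlt)⟩


variable {V : Type*} {G : SimpleGraph V}

lemma exists_walk_getVert {a b : V} (p : G.Walk a b) (i : ℕ) :
    ∀ (j : ℕ), i ≤ j → j ≤ p.length →
    Nonempty {w : G.Walk (p.getVert i) (p.getVert j) // w.length = j - i} := by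
  intro j
  intro hij
  induction j, hij using Nat.le_induction with
  | base => intro _; exact ⟨Walk.nil, by simp⟩
  | succ j hij IH =>
    intro hj
    obtain ⟨w, hw⟩ := IH (by omega)
    have hadj : G.Adj (p.getVert j) (p.getVert (j + 1)) := p.adj_getVert_succ (by omega)
    exact ⟨w.append (Walk.cons hadj Walk.nil), by
      rw [Walk.length_append, hw, Walk.length_cons, Walk.length_nil]; omega⟩

lemma tail_support_length {a b : V} (p : G.Walk a b) : p.support.tail.length = p.length := by
  rw [List.length_tail, Walk.length_support]; omega

lemma getVert_eq_support_getElem {a b : V} (p : G.Walk a b) (i : ℕ) (h : i ≤ p.length) :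
    p.support[i]'(by rw [Walk.length_support]; omega) = p.getVert i := by
  induction p generalizing i with
  | nil =>
    obtain rfl : i = 0 := by simpa using h
    simp
  | cons hadj q IH =>
    cases i with
    | zero => simp
    | succ i =>
      simp only [Walk.support_cons, List.getElem_cons_succ, Walk.getVert_cons_succ]
      exact IH i (by simpa using h)

lemma tail_getElem_getVert {a : V} (c : G.Walk a a) (m : ℕ) (hm : m < c.length) :
    c.support.tail[m]'(by rw [tail_support_length]; omega) = c.getVert (m + 1) := by
  have h1 : c.support.tail[m]'(by rw [tail_support_length]; omega)
      = c.support[m+1]'(by rw [Walk.length_support]; omega) := by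
    rw [List.getElem_tail]
  rw [h1, getVert_eq_support_getElem c (m+1) (by omega)]

lemma cycle_getVert_injOn {u : V} {c : G.Walk u u} (hc : c.IsCycle) :
    ∀ i j, i < j → j < c.length → c.getVert i ≠ c.getVert j := by
  intro i j hij hj heq
  have h3 := hc.three_le_length
  have hnd : c.support.tail.Nodup := hc.support_nodup
  by_cases hi : i = 0
  · subst hi
    have h1 : c.support.tail[j-1]'(by rw [tail_support_length]; omega) = c.getVert j := by
      have := tail_getElem_getVert c (j-1) (by omega)
      rw [this]; congr 1; omega
    have h2 : c.support.tail[c.length - 1]'(by rw [tail_support_length]; omega)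
        = c.getVert c.length := by
      have := tail_getElem_getVert c (c.length - 1) (by omega)
      rw [this]; congr 1; omega
    have heq2 : c.support.tail[j-1]'(by rw [tail_support_length]; omega)
        = c.support.tail[c.length - 1]'(by rw [tail_support_length]; omega) := by
      rw [h1, h2, ← heq, c.getVert_zero, c.getVert_length]
    have := hnd.getElem_inj_iff.mp heq2
    omega
  · have h1 : c.support.tail[i-1]'(by rw [tail_support_length]; omega) = c.getVert i := by
      have := tail_getElem_getVert c (i-1) (by omega)
      rw [this]; congr 1; omega
    have h2 : c.support.tail[j-1]'(by rw [tail_support_length]; omega) = c.getVert j := by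
      have := tail_getElem_getVert c (j-1) (by omega)
      rw [this]; congr 1; omega
    have heq2 : c.support.tail[i-1]'(by rw [tail_support_length]; omega)
        = c.support.tail[j-1]'(by rw [tail_support_length]; omega) := by rw [h1, h2, heq]
    have := hnd.getElem_inj_iff.mp heq2
    omega


variable {V : Type*} {G : SimpleGraph V}

lemma arc_bound {u : V} {c : G.Walk u u} {L t : ℕ}
    (hL : c.length = L) (hLodd : Odd L)
    (hKT : ∀ (x : V) (w : G.Walk x x), Odd w.length → L ≤ w.length)
    {i j : ℕ} (hij : i < j) (hjL : j ≤ L - 1)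
    (b : G.Walk (c.getVert j) (c.getVert i)) (hb : b.length = t) :
    (j - i + t ≤ 2 * t ∧ (j - i + t) % 2 = 0) ∨
    (i + (L - j) + t ≤ 2 * t ∧ (i + (L - j) + t) % 2 = 0) := by
  have hL1 : 1 ≤ L := hLodd.pos
  obtain ⟨s1, hs1⟩ := exists_walk_getVert c i j (le_of_lt hij) (by omega)
  obtain ⟨s0, hs0⟩ := exists_walk_getVert c 0 i (by omega) (by omega)
  obtain ⟨s2, hs2⟩ := exists_walk_getVert c j L (by omega) (by omega)
  set w1 : G.Walk (c.getVert i) (c.getVert i) := s1.append b with hw1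
  set w2 : G.Walk u u :=
    (s0.append (b.reverse.append s2)).copy (c.getVert_zero) (by rw [← hL]; exact c.getVert_length)
    with hw2
  have hd1 : w1.length = (j - i) + t := by
    rw [hw1, Walk.length_append, hs1, hb]
  have hd2 : w2.length = i + (t + (L - j)) := by
    rw [hw2, Walk.length_copy, Walk.length_append, Walk.length_append, Walk.length_reverse,
      hs0, hs2, hb]
    omega
  have hLo : L % 2 = 1 := Nat.odd_iff.mp hLodd
  rcases Nat.even_or_odd w1.length with he1 | ho1
  · left
    have he1' : w1.length % 2 = 0 := Nat.even_iff.mp he1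
    have ho2 : Odd w2.length := by
      rw [Nat.odd_iff]
      rw [hd1] at he1'
      rw [hd2]
      omega
    have := hKT u w2 ho2
    rw [hd2] at this
    rw [hd1] at he1'
    omega
  · right
    have := hKT _ w1 ho1
    have ho1' : w1.length % 2 = 1 := Nat.odd_iff.mp ho1
    rw [hd1] at this ho1'
    omega

lemma chord_bound {u : V} {c : G.Walk u u} {L : ℕ}
    (hL : c.length = L) (hLodd : Odd L)
    (hKT : ∀ (x : V) (w : G.Walk x x), Odd w.length → L ≤ w.length)
    {i j : ℕ} (hij : i < j) (hjL : j ≤ L - 1)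
    (hadj : G.Adj (c.getVert i) (c.getVert j)) :
    j - i = 1 ∨ j - i = L - 1 := by
  have := arc_bound (t := 1) hL hLodd hKT hij hjL (Walk.cons hadj.symm Walk.nil) (by simp)
  have hL1 : 1 ≤ L := hLodd.pos
  rcases this with ⟨h1, h2⟩ | ⟨h1, h2⟩ <;> omega

lemma common_nbr_bound {u : V} {c : G.Walk u u} {L : ℕ}
    (hL : c.length = L) (hLodd : Odd L)
    (hKT : ∀ (x : V) (w : G.Walk x x), Odd w.length → L ≤ w.length)
    {i j : ℕ} (hij : i < j) (hjL : j ≤ L - 1) {v : V}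
    (hvi : G.Adj v (c.getVert i)) (hvj : G.Adj v (c.getVert j)) :
    j - i = 2 ∨ j - i = L - 2 := by
  have := arc_bound (t := 2) hL hLodd hKT hij hjL (Walk.cons hvj.symm (Walk.cons hvi Walk.nil)) (by simp)
  have hL1 : 1 ≤ L := hLodd.pos
  rcases this with ⟨h1, h2⟩ | ⟨h1, h2⟩ <;> omega


lemma turan_two_bound (m : ℕ) : #(turanGraph m 2).edgeFinset ≤ m ^ 2 / 4 := by
  classical
  set a := #(univ.filter (fun v : Fin m => (v : ℕ) % 2 = 0)) with ha
  set b := #(univ.filter (fun v : Fin m => ¬ (v : ℕ) % 2 = 0)) with hb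
  have hab : a + b = m := by
    rw [ha, hb, Finset.card_filter_add_card_filter_not]
    simp
  have hdeg : ∀ v : Fin m, (turanGraph m 2).degree v
      = if (v : ℕ) % 2 = 0 then b else a := by
    intro v
    rw [degree, neighborFinset_eq_filter]
    by_cases hv : (v : ℕ) % 2 = 0
    · rw [if_pos hv]
      congr 1
      ext w
      simp only [mem_filter, mem_univ, true_and]
      show (v : ℕ) % 2 ≠ (w : ℕ) % 2 ↔ _
      omega
    · rw [if_neg hv]
      congr 1
      ext w
      simp only [mem_filter, mem_univ, true_and]
      show (v : ℕ) % 2 ≠ (w : ℕ) % 2 ↔ _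
      omega
  have hsum := (turanGraph m 2).sum_degrees_eq_twice_card_edges
  have hsum2 : ∑ v : Fin m, (turanGraph m 2).degree v = a * b + b * a := by
    rw [Finset.sum_congr rfl (fun v _ => hdeg v)]
    rw [Finset.sum_ite, Finset.sum_const, Finset.sum_const]
    simp [ha, hb, mul_comm]
  have hE : 2 * #(turanGraph m 2).edgeFinset = 2 * (a * b) := by
    rw [← hsum, hsum2]; ring
  have hE2 : #(turanGraph m 2).edgeFinset = a * b := by omega
  rw [hE2, Nat.le_div_iff_mul_le (by norm_num)]
  have hZ : (a : ℤ) * b * 4 ≤ ((a : ℤ) + b) ^ 2 := by nlinarith [sq_nonneg ((a : ℤ) - b)]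
  have hN : a * b * 4 ≤ (a + b) ^ 2 := by exact_mod_cast hZ
  rw [hab] at hN
  exact hN

lemma mantel {W : Type*} [Fintype W] (H : SimpleGraph W) (hH : H.CliqueFree 3) :
    #(H.edgeFinset) ≤ (Fintype.card W) ^ 2 / 4 := by
  classical
  set m := Fintype.card W with hm
  have e : W ≃ Fin m := Fintype.equivFinOfCardEq rfl
  set H' := H.comap (e.symm : Fin m ≃ W).toEmbedding with hH'
  have iso : H' ≃g H := Iso.comap e.symm H
  have hcf : H'.CliqueFree 3 := hH.comap iso.toEmbedding.isContained
  have hcard : #H'.edgeFinset = #H.edgeFinset := iso.card_edgeFinset_eq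
  have htu := (isTuranMaximal_turanGraph (by norm_num : 0 < 2)).2 hcf
  calc #H.edgeFinset = #H'.edgeFinset := hcard.symm
  _ ≤ #(turanGraph m 2).edgeFinset := htu
  _ ≤ m ^ 2 / 4 := turan_two_bound m


lemma final_arith (n k L : ℕ) (hk : 1 ≤ k) (hL : 2*k+3 ≤ L) (hLn : L ≤ n) (hLodd : L % 2 = 1) :
    L + 2 * (n - L) + (n - L)^2/4 ≤ (n - 2*k + 1)^2/4 + 2*k - 1 := by
  set m := n - L with hm
  obtain ⟨e, he⟩ : ∃ e, L = 2*k+3 + 2*e := ⟨(L - (2*k+3))/2, by omega⟩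
  have h1 : (n - 2*k + 1) = (m + 4) + 2*e := by omega
  have hsq1 : (m + 4)^2 = m^2 + (2*m + 4) * 4 := by ring
  have hd1 : (m + 4)^2 / 4 = m^2/4 + (2*m + 4) := by
    rw [hsq1, Nat.add_mul_div_right _ _ (by norm_num)]
  have hsq2 : ((m+4) + 2*e)^2 = (m+4)^2 + (e*(m+4) + e^2) * 4 := by ring
  have hd2 : ((m+4) + 2*e)^2 / 4 = (m+4)^2/4 + (e*(m+4) + e^2) := by
    rw [hsq2, Nat.add_mul_div_right _ _ (by norm_num)]
  rw [h1, hd2, hd1]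
  have hee : 2*e ≤ e * (m+4) := by
    calc 2*e = e * 2 := by ring
    _ ≤ e * (m+4) := Nat.mul_le_mul_left e (by omega)
  omega

/-- Lemma 2.2 (Caccetta et al.): a non-bipartite graph on `n` vertices with no odd cycle of
length at most `2k + 1` has at most `⌊(n − 2k + 1)²/4⌋ + 2k − 1` edges. -/
theorem stmt19 (n k : ℕ) (hk : 1 ≤ k) (G : SimpleGraph (Fin n))
    (hnb : ¬ G.Colorable 2)
    (hodd : ∀ (u : Fin n) (c : G.Walk u u), c.IsCycle → Odd c.length → 2 * k + 1 < c.length) :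
    G.edgeFinset.card ≤ (n - 2 * k + 1) ^ 2 / 4 + 2 * k - 1 := by
  classical
  -- G is triangle-free
  have hfree : G.CliqueFree 3 := by
    intro t ht
    rw [is3Clique_iff] at ht
    obtain ⟨a, b, c0, hab, hac, hbc, rfl⟩ := ht
    have hcyc : (Walk.cons hab (Walk.cons hbc (Walk.cons hac.symm Walk.nil))).IsCycle := by
      rw [Walk.cons_isCycle_iff]
      constructor
      · rw [Walk.isPath_def]
        simp only [Walk.support_cons, Walk.support_nil]
        simp [List.nodup_cons, hbc.ne, hab.ne', hac.ne']
      · simp only [Walk.edges_cons, Walk.edges_nil, List.mem_cons, List.not_mem_nil, or_false]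
        rintro (h | h)
        · rw [Sym2.eq_iff] at h
          rcases h with ⟨h1, h2⟩ | ⟨h1, h2⟩
          · exact hab.ne h1
          · exact hac.ne h1
        · rw [Sym2.eq_iff] at h
          rcases h with ⟨h1, h2⟩ | ⟨h1, h2⟩
          · exact hac.ne h1
          · exact hbc.ne h2
    have h3 := hodd a _ hcyc (by simp [Walk.length_cons]; exact ⟨1, rfl⟩)
    simp only [Walk.length_cons, Walk.length_nil] at h3
    omega
  -- minimal odd cycle
  have hoddwalk : ∃ (u : Fin n) (w : G.Walk u u), Odd w.length := by
    by_contra h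
    push_neg at h
    exact hnb (colorable_two_of_no_odd_closed (fun u w => by simpa using h u w))
  obtain ⟨u0, w0, hw0⟩ := hoddwalk
  obtain ⟨x0, c0, hc0, hco0, _⟩ := exists_odd_cycle_of_odd_closed w0.length u0 w0 rfl hw0
  have hPex : ∃ ℓ, ∃ (x : Fin n) (c : G.Walk x x), c.IsCycle ∧ Odd c.length ∧ c.length = ℓ :=
    ⟨c0.length, x0, c0, hc0, hco0, rfl⟩
  set L := Nat.find hPex with hLdef
  obtain ⟨u, c, hc, hcodd, hclen⟩ := Nat.find_spec hPex
  have hKT : ∀ (x : Fin n) (w : G.Walk x x), Odd w.length → L ≤ w.length := by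
    intro x w hw
    obtain ⟨y, d, hd, hdo, hdle⟩ := exists_odd_cycle_of_odd_closed w.length x w rfl hw
    by_contra hlt
    exact Nat.find_min hPex (show d.length < L by omega) ⟨y, d, hd, hdo, rfl⟩
  have hclen' : c.length = L := by rw [hLdef]; exact hclen
  have hLodd : Odd L := by rw [← hclen']; exact hcodd
  have hL5 : 2*k+3 ≤ L := by
    have h5 := hodd u c hc hcodd
    rw [hclen'] at h5
    rcases hLodd with ⟨a, ha⟩
    omega
  -- the vertex set of the cycle
  set S : Finset (Fin n) := (Finset.range L).image c.getVert with hS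
  have hinj : Set.InjOn c.getVert ↑(Finset.range L) := by
    intro i hi j hj hij
    simp only [coe_range, Set.mem_Iio] at hi hj
    by_contra hne
    rcases Nat.lt_or_ge i j with h | h
    · exact cycle_getVert_injOn hc i j h (by omega) hij
    · exact cycle_getVert_injOn hc j i (by omega) (by omega) hij.symm
  have hScard : S.card = L := by
    rw [hS, Finset.card_image_of_injOn hinj, Finset.card_range]
  have hLn : L ≤ n := by
    have hcu := Finset.card_le_univ S
    rwa [hScard, Fintype.card_fin] at hcu
  have hmemS : ∀ x, x ∈ S ↔ ∃ i, i < L ∧ c.getVert i = x := by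
    intro x
    rw [hS, Finset.mem_image]
    constructor
    · rintro ⟨i, hi, hgi⟩; exact ⟨i, Finset.mem_range.mp hi, hgi⟩
    · rintro ⟨i, hi, hgi⟩; exact ⟨i, Finset.mem_range.mpr hi, hgi⟩
  -- partition of the edges
  set A := G.edgeFinset.filter (fun e => ∀ x ∈ e, x ∈ S) with hA
  set BC := G.edgeFinset.filter (fun e => ¬ ∀ x ∈ e, x ∈ S) with hBC
  set B := BC.filter (fun e => ∃ x ∈ e, x ∈ S) with hB
  set C := BC.filter (fun e => ¬ ∃ x ∈ e, x ∈ S) with hC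
  have hsplit1 : #A + #BC = #G.edgeFinset :=
    Finset.card_filter_add_card_filter_not _
  have hsplit2 : #B + #C = #BC :=
    Finset.card_filter_add_card_filter_not _
  -- bound on A
  have hAim : ∀ i j : ℕ, i < j → j < L → G.Adj (c.getVert i) (c.getVert j) →
      s(c.getVert i, c.getVert j) ∈
        (Finset.range L).image (fun m => s(c.getVert m, c.getVert (m+1))) := by
    intro i j hij hj hadj
    have hchord := chord_bound hclen' hLodd hKT hij (by omega) hadj
    rcases hchord with h1 | h2
    · refine Finset.mem_image.mpr ⟨i, Finset.mem_range.mpr (by omega), ?_⟩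
      have : i + 1 = j := by omega
      rw [this]
    · have hi0 : i = 0 := by omega
      have hj0 : j = L - 1 := by omega
      subst hi0; subst hj0
      refine Finset.mem_image.mpr ⟨L-1, Finset.mem_range.mpr (by omega), ?_⟩
      have h1 : L - 1 + 1 = L := by omega
      have h2 : c.getVert L = c.getVert 0 := by
        rw [show L = c.length from hclen'.symm, c.getVert_length, c.getVert_zero]
      rw [h1, h2, Sym2.eq_swap]
  have hAsub : A ⊆ (Finset.range L).image (fun m => s(c.getVert m, c.getVert (m+1))) := by
    intro e he
    rw [hA, Finset.mem_filter] at he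
    obtain ⟨heE, hin⟩ := he
    induction e using Sym2.ind with
    | _ x y =>
      have hadj : G.Adj x y := by rwa [mem_edgeFinset, mem_edgeSet] at heE
      obtain ⟨i, hi, hgx⟩ := (hmemS x).mp (hin x (Sym2.mem_mk_left x y))
      obtain ⟨j, hj, hgy⟩ := (hmemS y).mp (hin y (Sym2.mem_mk_right x y))
      subst hgx; subst hgy
      have hne : i ≠ j := fun h => hadj.ne (by rw [h])
      rcases Nat.lt_or_ge i j with h | h
      · exact hAim i j h hj hadj
      · rw [Sym2.eq_swap]
        exact hAim j i (by omega) hi hadj.symm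
  have hAcard : #A ≤ L := by
    calc #A ≤ #((Finset.range L).image (fun m => s(c.getVert m, c.getVert (m+1)))) :=
      Finset.card_le_card hAsub
    _ ≤ #(Finset.range L) := Finset.card_image_le
    _ = L := Finset.card_range L
  -- bound on B
  have hNB : ∀ v : Fin n, #((G.neighborFinset v) ∩ S) ≤ 2 := by
    intro v
    by_contra hgt
    rw [not_le] at hgt
    obtain ⟨x, y, z, hx, hy, hz, hxy, hxz, hyz⟩ := Finset.two_lt_card_iff.mp hgt
    simp only [Finset.mem_inter, mem_neighborFinset] at hx hy hz
    obtain ⟨i, hi, hgx⟩ := (hmemS x).mp hx.2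
    obtain ⟨j, hj, hgy⟩ := (hmemS y).mp hy.2
    obtain ⟨l, hl, hgz⟩ := (hmemS z).mp hz.2
    subst hgx; subst hgy; subst hgz
    have ai := hx.1
    have aj := hy.1
    have al := hz.1
    have hij : i ≠ j := fun h => hxy (by rw [h])
    have hil : i ≠ l := fun h => hxz (by rw [h])
    have hjl : j ≠ l := fun h => hyz (by rw [h])
    have key3 : ∀ p q r, p < q → q < r → r < L → G.Adj v (c.getVert p) →
        G.Adj v (c.getVert q) → G.Adj v (c.getVert r) → False := by
      intro p q r h1 h2 h3 a1 a2 a3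
      have d1 := common_nbr_bound hclen' hLodd hKT h1 (by omega) a1 a2
      have d2 := common_nbr_bound hclen' hLodd hKT h2 (by omega) a2 a3
      have d3 := common_nbr_bound hclen' hLodd hKT (show p < r by omega) (by omega) a1 a3
      rcases hLodd with ⟨w, hw⟩
      omega
    rcases Nat.lt_trichotomy i j with h1 | h1 | h1
    · rcases Nat.lt_trichotomy j l with h2 | h2 | h2
      · exact key3 i j l h1 h2 hl ai aj al
      · exact hjl h2
      · rcases Nat.lt_trichotomy i l with h3 | h3 | h3
        · exact key3 i l j h3 h2 hj ai al aj
        · exact hil h3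
        · exact key3 l i j h3 h1 hj al ai aj
    · exact hij h1
    · rcases Nat.lt_trichotomy i l with h2 | h2 | h2
      · exact key3 j i l h1 h2 hl aj ai al
      · exact hil h2
      · rcases Nat.lt_trichotomy j l with h3 | h3 | h3
        · exact key3 j l i h3 h2 hi aj al ai
        · exact hjl h3
        · exact key3 l j i h3 h1 hi al aj ai
  have hBsub : B ⊆ (univ \ S).biUnion
      (fun v => ((G.neighborFinset v) ∩ S).image (fun w => s(v, w))) := by
    intro e he
    rw [hB, Finset.mem_filter, hBC, Finset.mem_filter] at he
    obtain ⟨⟨heE, hnin⟩, htouch⟩ := he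
    induction e using Sym2.ind with
    | _ x y =>
      have hadj : G.Adj x y := by rwa [mem_edgeFinset, mem_edgeSet] at heE
      have hcases : (x ∈ S ∧ y ∉ S) ∨ (y ∈ S ∧ x ∉ S) := by
        simp only [Sym2.mem_iff] at hnin htouch
        by_cases hxS : x ∈ S <;> by_cases hyS : y ∈ S
        · exact absurd (fun z hz => by rcases hz with rfl | rfl <;> assumption) hnin
        · exact Or.inl ⟨hxS, hyS⟩
        · exact Or.inr ⟨hyS, hxS⟩
        · exfalso
          obtain ⟨w, hw1, hw2⟩ := htouch
          rcases hw1 with rfl | rfl <;> [exact hxS hw2; exact hyS hw2]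
      rcases hcases with ⟨hxS, hyS⟩ | ⟨hyS, hxS⟩
      · refine Finset.mem_biUnion.mpr ⟨y, by simp [hyS], ?_⟩
        refine Finset.mem_image.mpr ⟨x, ?_, Sym2.eq_swap⟩
        rw [Finset.mem_inter, mem_neighborFinset]
        exact ⟨hadj.symm, hxS⟩
      · refine Finset.mem_biUnion.mpr ⟨x, by simp [hxS], ?_⟩
        refine Finset.mem_image.mpr ⟨y, ?_, rfl⟩
        rw [Finset.mem_inter, mem_neighborFinset]
        exact ⟨hadj, hyS⟩
  have hBcard : #B ≤ 2 * (n - L) := by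
    have h1 : #B ≤ ∑ v ∈ univ \ S, #(((G.neighborFinset v) ∩ S).image (fun w => s(v, w))) :=
      le_trans (Finset.card_le_card hBsub) (Finset.card_biUnion_le)
    have h2 : ∀ v ∈ univ \ S, #(((G.neighborFinset v) ∩ S).image (fun w => s(v, w))) ≤ 2 :=
      fun v _ => le_trans Finset.card_image_le (hNB v)
    have h3 : #B ≤ ∑ _v ∈ univ \ S, 2 := le_trans h1 (Finset.sum_le_sum h2)
    rw [Finset.sum_const, smul_eq_mul, Finset.card_sdiff_of_subset (Finset.subset_univ S),
      Finset.card_univ, Fintype.card_fin, hScard] at h3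
    omega
  -- bound on C
  set T : Finset (Fin n) := univ \ S with hT
  set H : SimpleGraph ↥(↑T : Set (Fin n)) := G.induce ↑T with hHdef
  have hHcf : H.CliqueFree 3 := hfree.comap (SimpleGraph.Embedding.induce (G := G) (↑T : Set (Fin n))).isContained
  have hCsub1 : C ⊆ H.edgeFinset.image (Sym2.map Subtype.val) := by
    intro e he
    rw [hC, Finset.mem_filter, hBC, Finset.mem_filter] at he
    obtain ⟨⟨heE, hnin⟩, hntouch⟩ := he
    induction e using Sym2.ind with
    | _ x y =>
      have hadj : G.Adj x y := by rwa [mem_edgeFinset, mem_edgeSet] at heE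
      have hxS : x ∉ S := fun h => hntouch ⟨x, Sym2.mem_mk_left x y, h⟩
      have hyS : y ∉ S := fun h => hntouch ⟨y, Sym2.mem_mk_right x y, h⟩
      have hxT : x ∈ (↑T : Set (Fin n)) := by simp [hT, hxS]
      have hyT : y ∈ (↑T : Set (Fin n)) := by simp [hT, hyS]
      refine Finset.mem_image.mpr ⟨s(⟨x, hxT⟩, ⟨y, hyT⟩), ?_, by simp⟩
      rw [mem_edgeFinset, mem_edgeSet]
      exact hadj
  have hCsub2 : H.edgeFinset.image (Sym2.map Subtype.val) ⊆ C := by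
    intro e he
    obtain ⟨e', he', rfl⟩ := Finset.mem_image.mp he
    revert he'
    induction e' using Sym2.ind with
    | _ x y =>
      intro he'
      rw [mem_edgeFinset, mem_edgeSet] at he'
      have hadj : G.Adj ↑x ↑y := he'
      have hxS : (x : Fin n) ∉ S := by
        have := x.2
        simp [hT] at this
        exact this
      have hyS : (y : Fin n) ∉ S := by
        have := y.2
        simp [hT] at this
        exact this
      rw [hC, Finset.mem_filter, hBC, Finset.mem_filter]
      refine ⟨⟨?_, ?_⟩, ?_⟩
      · rw [Sym2.map_pair_eq, mem_edgeFinset, mem_edgeSet]; exact hadj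
      · rw [Sym2.map_pair_eq]
        intro hall
        exact hxS (hall x (Sym2.mem_mk_left _ _))
      · rw [Sym2.map_pair_eq]
        rintro ⟨w, hw, hwS⟩
        rcases Sym2.mem_iff.mp hw with rfl | rfl
        · exact hxS hwS
        · exact hyS hwS
  have hCeq : C = H.edgeFinset.image (Sym2.map Subtype.val) :=
    Finset.Subset.antisymm hCsub1 hCsub2
  have hCcard : #C = #H.edgeFinset := by
    rw [hCeq, Finset.card_image_of_injective _ (Sym2.map.injective Subtype.val_injective)]
  have hTcard : Fintype.card ↥(↑T : Set (Fin n)) = n - L := by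
    rw [← Set.toFinset_card, Finset.toFinset_coe, hT,
      Finset.card_sdiff_of_subset (Finset.subset_univ S), Finset.card_univ, Fintype.card_fin, hScard]
  have hCbound : #C ≤ (n - L)^2/4 := by
    rw [hCcard]
    have := mantel H hHcf
    rwa [hTcard] at this
  -- final arithmetic
  have hfin := final_arith n k L hk hL5 hLn (Nat.odd_iff.mp hLodd)
  omega
end
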